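/- arXiv:2305.08693 — 10 statements merged into one kernel-verified Lean document; each statement's English description precedes it below -/
import Mathlib

section
/- For every tensor M in the space X⁰ on the reference square, the function div div M = ∂ₓₓ a + 2 ∂ₓᵧ b + ∂ᵧᵧ c is a polynomial of total degree at most 1, i.e. div div X⁰ ⊆ P¹. -/
open MvPolynomial

noncomputable section

/-- Bivariate real polynomials. -/
abbrev R2 : Type := MvPolynomial (Fin 2) ℝ

def Px : R2 := X 0
def Py : R2 := X 1

/-- Space of the entry `a`: `P^{1,1} ⊕ span{x², x³}`. -/
def Aspace : Submodule ℝ R2 :=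
  Submodule.span ℝ {1, Px, Py, Px * Py, Px ^ 2, Px ^ 3}

/-- Space of the entry `b`: `P² ⊕ span{x²y, xy²}`. -/
def Bspace : Submodule ℝ R2 :=
  Submodule.span ℝ {1, Px, Py, Px ^ 2, Px * Py, Py ^ 2, Px ^ 2 * Py, Px * Py ^ 2}

/-- Space of the entry `c`: `P^{1,1} ⊕ span{y², y³}`. -/
def Cspace : Submodule ℝ R2 :=
  Submodule.span ℝ {1, Px, Py, Px * Py, Py ^ 2, Py ^ 3}

/-- The space `X⁰` of symmetric tensors `[[a,b],[b,c]]`, identified with triples `(a,b,c)`. -/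
def X0 : Submodule ℝ (R2 × R2 × R2) := Aspace.prod (Bspace.prod Cspace)

/-- `div div` of the symmetric tensor `[[a,b],[b,c]]`: `∂ₓₓa + 2∂ₓᵧb + ∂ᵧᵧc`. -/
def divdiv (a b c : R2) : R2 :=
  pderiv 0 (pderiv 0 a) + 2 • pderiv 0 (pderiv 1 b) + pderiv 1 (pderiv 1 c)

lemma pd_ofNat (i : Fin 2) (n : ℕ) [n.AtLeastTwo] : pderiv (R := ℝ) i (OfNat.ofNat n : R2) = 0 := by
  have : (OfNat.ofNat n : R2) = ((n : ℕ) : R2) := (Nat.cast_ofNat).symm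
  rw [this]; exact Derivation.map_natCast _ _

lemma pd_two (i : Fin 2) : pderiv (R := ℝ) i ((2:R2)) = 0 := pd_ofNat i 2
lemma pd_three (i : Fin 2) : pderiv (R := ℝ) i ((3:R2)) = 0 := pd_ofNat i 3

lemma td_ofNat (n : ℕ) [n.AtLeastTwo] : (OfNat.ofNat n : R2).totalDegree = 0 := by
  rw [← map_ofNat (C : ℝ →+* R2) n, totalDegree_C]

lemma td_two : ((2:R2)).totalDegree = 0 := td_ofNat 2
lemma td_three : ((3:R2)).totalDegree = 0 := td_ofNat 3

lemma tdmul0 (p q : R2) (hp : p.totalDegree = 0) (hq : q.totalDegree ≤ 1) :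
    (p*q).totalDegree ≤ 1 := (totalDegree_mul p q).trans (by omega)

set_option maxHeartbeats 1000000 in
lemma master : ∀ g ∈ ([1, Px, Py, Px * Py, Px ^ 2, Px ^ 3, Px ^ 2 * Py, Px * Py ^ 2,
      Py ^ 2, Py ^ 3] : List R2),
    ∀ i j : Fin 2, (pderiv (R:=ℝ) i (pderiv j g)).totalDegree ≤ 1 := by
  intro g hg i j
  fin_cases hg <;> fin_cases i <;> fin_cases j <;>
    simp [Px, Py, pderiv_pow, pderiv_X, pderiv_mul, pd_two, pd_three, Pi.single_apply,
      totalDegree_X] <;>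
    first
      | exact tdmul0 _ _ td_two (le_of_eq (totalDegree_X _))
      | exact tdmul0 _ _ td_three (tdmul0 _ _ td_two (le_of_eq (totalDegree_X _)))
      | exact le_trans (totalDegree_mul _ _) (by simp [totalDegree_X, td_two])
      | simp [td_two]

abbrev T1 : Submodule ℝ R2 := restrictTotalDegree (Fin 2) ℝ 1

lemma spanT (S : Set R2) (i j : Fin 2)
    (h : ∀ p ∈ S, (pderiv (R:=ℝ) i (pderiv j p)).totalDegree ≤ 1) :
    ∀ p ∈ Submodule.span ℝ S, pderiv (R:=ℝ) i (pderiv j p) ∈ T1 := by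
  have hle : Submodule.span ℝ S ≤
      T1.comap ((pderiv (R:=ℝ) i).toLinearMap ∘ₗ (pderiv j).toLinearMap) := by
    rw [Submodule.span_le]
    intro p hp
    simpa [Submodule.mem_comap, mem_restrictTotalDegree] using h p hp
  intro p hp
  exact hle hp

set_option maxHeartbeats 2000000 in
theorem stmt_1 (a b c : R2) (ha : a ∈ Aspace) (hb : b ∈ Bspace) (hc : c ∈ Cspace) :
    (divdiv a b c).totalDegree ≤ 1 := by
  have mA : pderiv (R:=ℝ) 0 (pderiv 0 a) ∈ T1 := by
    refine spanT _ 0 0 ?_ a ha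
    intro p hp
    simp only [Set.mem_insert_iff, Set.mem_singleton_iff] at hp
    rcases hp with h|h|h|h|h|h <;> subst h <;> exact master _ (by simp) 0 0
  have mB : pderiv (R:=ℝ) 0 (pderiv 1 b) ∈ T1 := by
    refine spanT _ 0 1 ?_ b hb
    intro p hp
    simp only [Set.mem_insert_iff, Set.mem_singleton_iff] at hp
    rcases hp with h|h|h|h|h|h|h|h <;> subst h <;> exact master _ (by simp) 0 1
  have mC : pderiv (R:=ℝ) 1 (pderiv 1 c) ∈ T1 := by
    refine spanT _ 1 1 ?_ c hc
    intro p hp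
    simp only [Set.mem_insert_iff, Set.mem_singleton_iff] at hp
    rcases hp with h|h|h|h|h|h <;> subst h <;> exact master _ (by simp) 1 1
  rw [← mem_restrictTotalDegree]
  refine T1.add_mem (T1.add_mem mA ?_) mC
  rw [two_smul]
  exact T1.add_mem mB mB
end
end

section
/- The operator div div maps the space X⁰ on the reference square surjectively onto P¹, the space of polynomials of total degree at most 1. -/
open MvPolynomial

noncomputable section

/-! ### Auxiliary lemmas -/

lemma ofNat_eq_C (n : ℕ) [n.AtLeastTwo] : (OfNat.ofNat n : R2) = C (OfNat.ofNat n : ℝ) :=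
  (map_ofNat (C : ℝ →+* R2) n).symm

lemma pd2 (i : Fin 2) : pderiv (R:=ℝ) i (2 : R2) = 0 := by rw [ofNat_eq_C, pderiv_C]
lemma pd3 (i : Fin 2) : pderiv (R:=ℝ) i (3 : R2) = 0 := by rw [ofNat_eq_C, pderiv_C]
lemma td2 : (2 : R2).totalDegree = 0 := by rw [ofNat_eq_C, totalDegree_C]
lemma td3 : (3 : R2).totalDegree = 0 := by rw [ofNat_eq_C, totalDegree_C]

lemma td_mul_le {f g : R2} (hf : f.totalDegree = 0) (hg : g.totalDegree ≤ 1) :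
    (f * g).totalDegree ≤ 1 := by
  have := totalDegree_mul f g; omega

/-- `totalDegree ≤ 1` for a linear image of a span, checked on generators. -/
lemma td_span (D : R2 →ₗ[ℝ] R2) {s : Set R2}
    (hs : ∀ q ∈ s, (D q).totalDegree ≤ 1) {p : R2} (hp : p ∈ Submodule.span ℝ s) :
    (D p).totalDegree ≤ 1 := by
  induction hp using Submodule.span_induction with
  | mem q hq => exact hs q hq
  | zero => simp
  | add x y _ _ hx hy => rw [map_add]; exact (totalDegree_add _ _).trans (max_le hx hy)
  | smul r x _ hx => rw [map_smul]; exact (totalDegree_smul_le r _).trans hx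

def Dxx : R2 →ₗ[ℝ] R2 := (pderiv 0).toLinearMap.comp (pderiv 0).toLinearMap
def Dxy : R2 →ₗ[ℝ] R2 := (pderiv 0).toLinearMap.comp (pderiv 1).toLinearMap
def Dyy : R2 →ₗ[ℝ] R2 := (pderiv 1).toLinearMap.comp (pderiv 1).toLinearMap

lemma Agen : ∀ q ∈ ({1, Px, Py, Px * Py, Px ^ 2, Px ^ 3} : Set R2),
    (Dxx q).totalDegree ≤ 1 := by
  intro q hq
  simp only [Set.mem_insert_iff, Set.mem_singleton_iff] at hq
  rcases hq with rfl | rfl | rfl | rfl | rfl | rfl <;>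
    simp [Dxx, Px, Py, pderiv_pow, pd2, pd3, pderiv_X, pderiv_mul] <;>
    first
      | simp [td2, td3]
      | ((repeat apply td_mul_le (by simp [td2, td3])); simp)

lemma Bgen : ∀ q ∈ ({1, Px, Py, Px ^ 2, Px * Py, Py ^ 2, Px ^ 2 * Py, Px * Py ^ 2} : Set R2),
    (Dxy q).totalDegree ≤ 1 := by
  intro q hq
  simp only [Set.mem_insert_iff, Set.mem_singleton_iff] at hq
  rcases hq with rfl | rfl | rfl | rfl | rfl | rfl | rfl | rfl <;>
    simp [Dxy, Px, Py, pderiv_pow, pd2, pd3, pderiv_X, pderiv_mul] <;>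
    first
      | simp [td2, td3]
      | ((repeat apply td_mul_le (by simp [td2, td3])); simp)

lemma Cgen : ∀ q ∈ ({1, Px, Py, Px * Py, Py ^ 2, Py ^ 3} : Set R2),
    (Dyy q).totalDegree ≤ 1 := by
  intro q hq
  simp only [Set.mem_insert_iff, Set.mem_singleton_iff] at hq
  rcases hq with rfl | rfl | rfl | rfl | rfl | rfl <;>
    simp [Dyy, Px, Py, pderiv_pow, pd2, pd3, pderiv_X, pderiv_mul] <;>
    first
      | simp [td2, td3]
      | ((repeat apply td_mul_le (by simp [td2, td3])); simp)

lemma sum_support (m : Fin 2 →₀ ℕ) : ∑ i ∈ m.support, m i = m 0 + m 1 := by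
  rw [Finset.sum_subset (Finset.subset_univ _) (fun i _ h => Finsupp.notMem_support_iff.mp h),
    Fin.sum_univ_two]

lemma fin2_cases (m : Fin 2 →₀ ℕ) (h : m 0 + m 1 ≤ 1) :
    m = 0 ∨ m = Finsupp.single 0 1 ∨ m = Finsupp.single 1 1 := by
  have h0 : m 0 ≤ 1 := by omega
  have h1 : m 1 ≤ 1 := by omega
  interval_cases hm0 : m 0 <;> interval_cases hm1 : m 1
  · left; ext i; fin_cases i <;> simp [hm0, hm1]
  · right; right; ext i; fin_cases i <;> simp [hm0, hm1, Finsupp.single_apply]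
  · right; left; ext i; fin_cases i <;> simp [hm0, hm1, Finsupp.single_apply]
  · omega

lemma single_ne : (Finsupp.single (0:Fin 2) 1) ≠ Finsupp.single 1 1 := by
  intro e
  have := DFunLike.congr_fun e 0
  simp [Finsupp.single_apply] at this

lemma sne0 : (Finsupp.single (0:Fin 2) 1) ≠ 0 := by simp [Finsupp.single_eq_zero]
lemma sne1 : (Finsupp.single (1:Fin 2) 1) ≠ 0 := by simp [Finsupp.single_eq_zero]

/-- A polynomial of total degree at most 1 is an affine combination of `1, x, y`. -/
lemma deg1_decomp (p : R2) (h : p.totalDegree ≤ 1) :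
    p = C (coeff 0 p) + C (coeff (Finsupp.single 0 1) p) * X 0
      + C (coeff (Finsupp.single 1 1) p) * X 1 := by
  apply MvPolynomial.ext
  intro m
  rw [coeff_add, coeff_add, coeff_C, coeff_C_mul, coeff_C_mul, coeff_X', coeff_X']
  rcases le_or_gt (m 0 + m 1) 1 with hle | hlt
  · rcases fin2_cases m hle with rfl | rfl | rfl
    · rw [if_pos rfl, if_neg sne0, if_neg sne1]; ring
    · rw [if_neg sne0.symm, if_pos rfl, if_neg (Ne.symm single_ne)]; ring
    · rw [if_neg sne1.symm, if_neg single_ne, if_pos rfl]; ring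
  · have hc : coeff m p = 0 := by
      apply coeff_eq_zero_of_totalDegree_lt
      rw [sum_support]; omega
    have e0 : (0 : Fin 2 →₀ ℕ) ≠ m := by rintro rfl; simp at hlt
    have e1 : Finsupp.single (0:Fin 2) 1 ≠ m := by
      rintro rfl; simp [Finsupp.single_apply] at hlt
    have e2 : Finsupp.single (1:Fin 2) 1 ≠ m := by
      rintro rfl; simp [Finsupp.single_apply] at hlt
    rw [hc, if_neg e0, if_neg e1, if_neg e2]; ring

/-- `div div` maps `X⁰` surjectively onto `P¹`. -/
theorem stmt_2 :
    (∀ a b c : R2, a ∈ Aspace → b ∈ Bspace → c ∈ Cspace →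
      (divdiv a b c).totalDegree ≤ 1) ∧
    (∀ p : R2, p.totalDegree ≤ 1 →
      ∃ a b c : R2, a ∈ Aspace ∧ b ∈ Bspace ∧ c ∈ Cspace ∧ divdiv a b c = p) := by
  constructor
  · intro a b c ha hb hc
    have h1 : (Dxx a).totalDegree ≤ 1 := td_span Dxx Agen ha
    have h2 : (Dxy b).totalDegree ≤ 1 := td_span Dxy Bgen hb
    have h3 : (Dyy c).totalDegree ≤ 1 := td_span Dyy Cgen hc
    have h2' : ((2 : ℕ) • Dxy b).totalDegree ≤ 1 := (totalDegree_smul_le _ _).trans h2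
    unfold divdiv
    exact (totalDegree_add _ _).trans (max_le ((totalDegree_add _ _).trans (max_le h1 h2')) h3)
  · intro p hp
    set α := coeff 0 p with hα
    set β := coeff (Finsupp.single 0 1) p with hβ
    set γ := coeff (Finsupp.single 1 1) p with hγ
    refine ⟨C (α/2) * Px ^ 2 + C (β/6) * Px ^ 3, 0, C (γ/6) * Py ^ 3, ?_, ?_, ?_, ?_⟩
    · apply Submodule.add_mem
      · rw [← smul_eq_C_mul]
        exact Submodule.smul_mem _ _ (Submodule.subset_span (by simp))
      · rw [← smul_eq_C_mul]
        exact Submodule.smul_mem _ _ (Submodule.subset_span (by simp))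
    · exact Submodule.zero_mem _
    · rw [← smul_eq_C_mul]
      exact Submodule.smul_mem _ _ (Submodule.subset_span (by simp))
    · have hA : pderiv 0 (pderiv (R:=ℝ) (σ:=Fin 2) 0 (C (α/2) * X 0 ^ 2 + C (β/6) * X 0 ^ 3))
          = C α + C β * X 0 := by
        simp [pderiv_pow, pderiv_mul, pderiv_C, pd2, pd3, mul_comm, mul_assoc, mul_left_comm]
        rw [ofNat_eq_C, ofNat_eq_C, ← map_mul, ← map_mul, ← map_mul]
        ring_nf
      have hC : pderiv 1 (pderiv (R:=ℝ) (σ:=Fin 2) 1 (C (γ/6) * X 1 ^ 3)) = C γ * X 1 := by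
        simp [pderiv_pow, pderiv_mul, pderiv_C, pd2, pd3, mul_comm, mul_assoc, mul_left_comm]
        rw [ofNat_eq_C, ofNat_eq_C, ← C_mul, ← C_mul]
        congr 1
        ring
      have : divdiv (C (α/2) * Px ^ 2 + C (β/6) * Px ^ 3) 0 (C (γ/6) * Py ^ 3)
          = C α + C β * X 0 + C γ * X 1 := by
        unfold divdiv
        rw [show Px = X 0 from rfl, show Py = X 1 from rfl, hA, hC]
        simp
      rw [this, ← deg1_decomp p hp]
end
end

section
/- For every tensor M in X⁰ and every edge e of the reference square (-1,1)², the normal-normal trace n·Mn restricted to e is a polynomial of degree at most 1 in the edge parameter. -/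
open MvPolynomial

noncomputable section

/-- Evaluation of a bivariate polynomial at the point `(x,y)`. -/
def ev (x y : ℝ) (p : R2) : ℝ := eval ![x, y] p

/-- `2∂ₓb + ∂ᵧc`: up to sign, the effective shear force on the horizontal edges. -/
def shearH (b c : R2) : R2 := 2 • pderiv 0 b + pderiv 1 c

/-- `∂ₓa + 2∂ᵧb`: up to sign, the effective shear force on the vertical edges. -/
def shearV (a b : R2) : R2 := pderiv 0 a + 2 • pderiv 1 b

/-- Normal-normal traces `n·Mn` of `M = [[a,b],[b,c]]` on the four edges
`e₁ = (-1,1)×{-1}`, `e₂ = {1}×(-1,1)`, `e₃ = (-1,1)×{1}`, `e₄ = {-1}×(-1,1)`,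
each as a function of the edge coordinate. -/
def nnTrace (a b c : R2) : Fin 4 → ℝ → ℝ :=
  ![fun t => ev t (-1) c, fun t => ev 1 t a, fun t => ev t 1 c, fun t => ev (-1) t a]

/-- Effective shear forces `n·div M + ∂ₜ(t·Mn)` of `M = [[a,b],[b,c]]` on the four edges. -/
def shear (a b c : R2) : Fin 4 → ℝ → ℝ :=
  ![fun t => -(ev t (-1) (shearH b c)), fun t => ev 1 t (shearV a b),
    fun t => ev t 1 (shearH b c), fun t => -(ev (-1) t (shearV a b))]

/-- Jumps of the tangential-normal trace `t·Mn` at the four corners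
`n₁ = (-1,-1)`, `n₂ = (1,-1)`, `n₃ = (1,1)`, `n₄ = (-1,1)` (counterclockwise edges). -/
def cornerJump (b : R2) : Fin 4 → ℝ :=
  ![2 * ev (-1) (-1) b, -(2 * ev 1 (-1) b), 2 * ev 1 1 b, -(2 * ev (-1) 1 b)]

/-- A function of one real variable is a polynomial of degree at most one. -/
def IsAffine (f : ℝ → ℝ) : Prop := ∃ α β : ℝ, ∀ t : ℝ, f t = α + β * t


lemma affine_eval_span {S : Set R2} (v : ℝ → Fin 2 → ℝ) {p : R2}
    (hp : p ∈ Submodule.span ℝ S)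
    (hS : ∀ q ∈ S, IsAffine fun t => eval (v t) q) :
    IsAffine fun t => eval (v t) p := by
  induction hp using Submodule.span_induction with
  | mem q hq => exact hS q hq
  | zero => exact ⟨0, 0, by simp⟩
  | add x y _ _ hx hy =>
      obtain ⟨α, β, hα⟩ := hx; obtain ⟨γ, δ, hγ⟩ := hy
      exact ⟨α + γ, β + δ, fun t => by simp [hα t, hγ t]; ring⟩
  | smul r x _ hx =>
      obtain ⟨α, β, hα⟩ := hx
      exact ⟨r * α, r * β, fun t => by simp [hα t]; ring⟩

theorem stmt_7 (a b c : R2) (h : (a, b, c) ∈ X0) (j : Fin 4) :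
    IsAffine (nnTrace a b c j) := by
  obtain ⟨ha, hb, hc⟩ := h
  fin_cases j
  · refine affine_eval_span (fun t => ![t, -1]) hc ?_
    intro q hq
    simp only [Set.mem_insert_iff, Set.mem_singleton_iff] at hq
    rcases hq with rfl|rfl|rfl|rfl|rfl|rfl
    · exact ⟨1, 0, by simp⟩
    · exact ⟨0, 1, by simp [Px]⟩
    · exact ⟨-1, 0, by simp [Py]⟩
    · exact ⟨0, -1, by simp [Px, Py]⟩
    · exact ⟨1, 0, by simp [Py]⟩
    · exact ⟨-1, 0, by norm_num [Py]⟩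
  · refine affine_eval_span (fun t => ![1, t]) ha ?_
    intro q hq
    simp only [Set.mem_insert_iff, Set.mem_singleton_iff] at hq
    rcases hq with rfl|rfl|rfl|rfl|rfl|rfl
    · exact ⟨1, 0, by simp⟩
    · exact ⟨1, 0, by simp [Px]⟩
    · exact ⟨0, 1, by simp [Py]⟩
    · exact ⟨0, 1, by simp [Px, Py]⟩
    · exact ⟨1, 0, by simp [Px]⟩
    · exact ⟨1, 0, by simp [Px]⟩
  · refine affine_eval_span (fun t => ![t, 1]) hc ?_
    intro q hq
    simp only [Set.mem_insert_iff, Set.mem_singleton_iff] at hq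
    rcases hq with rfl|rfl|rfl|rfl|rfl|rfl
    · exact ⟨1, 0, by simp⟩
    · exact ⟨0, 1, by simp [Px]⟩
    · exact ⟨1, 0, by simp [Py]⟩
    · exact ⟨0, 1, by simp [Px, Py]⟩
    · exact ⟨1, 0, by simp [Py]⟩
    · exact ⟨1, 0, by simp [Py]⟩
  · refine affine_eval_span (fun t => ![-1, t]) ha ?_
    intro q hq
    simp only [Set.mem_insert_iff, Set.mem_singleton_iff] at hq
    rcases hq with rfl|rfl|rfl|rfl|rfl|rfl
    · exact ⟨1, 0, by simp⟩
    · exact ⟨-1, 0, by simp [Px]⟩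
    · exact ⟨0, 1, by simp [Py]⟩
    · exact ⟨0, -1, by simp [Px, Py]⟩
    · exact ⟨1, 0, by simp [Px]⟩
    · exact ⟨-1, 0, by norm_num [Px]⟩
end
end

section
/- For every tensor M in X⁰ and every edge e of the reference square, the effective shear force n·div M + ∂ₜ(t·Mn) restricted to e is a polynomial of degree at most 1 in the edge parameter. -/
open MvPolynomial

noncomputable section

lemma isAffine_of_eval (f : ℝ → ℝ) (h : ∀ t, f t = f 0 + (f 1 - f 0) * t) :
    IsAffine f := ⟨_, _, h⟩

set_option maxHeartbeats 1000000 in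
theorem stmt_8 (a b c : R2) (h : (a, b, c) ∈ X0) (j : Fin 4) :
    IsAffine (shear a b c j) := by
  have ha : a ∈ Aspace := h.1
  have hb : b ∈ Bspace := h.2.1
  have hc : c ∈ Cspace := h.2.2
  rw [Aspace, show ({1, Px, Py, Px * Py, Px ^ 2, Px ^ 3} : Set R2)
      = Set.range ![1, Px, Py, Px * Py, Px ^ 2, Px ^ 3] by
    ext p; simp [Matrix.range_cons, Matrix.range_empty]; tauto,
    Submodule.mem_span_range_iff_exists_fun] at ha
  rw [Bspace, show ({1, Px, Py, Px ^ 2, Px * Py, Py ^ 2, Px ^ 2 * Py, Px * Py ^ 2} : Set R2)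
      = Set.range ![1, Px, Py, Px ^ 2, Px * Py, Py ^ 2, Px ^ 2 * Py, Px * Py ^ 2] by
    ext p; simp [Matrix.range_cons, Matrix.range_empty]; tauto,
    Submodule.mem_span_range_iff_exists_fun] at hb
  rw [Cspace, show ({1, Px, Py, Px * Py, Py ^ 2, Py ^ 3} : Set R2)
      = Set.range ![1, Px, Py, Px * Py, Py ^ 2, Py ^ 3] by
    ext p; simp [Matrix.range_cons, Matrix.range_empty]; tauto,
    Submodule.mem_span_range_iff_exists_fun] at hc
  obtain ⟨fa, hfa⟩ := ha
  obtain ⟨fb, hfb⟩ := hb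
  obtain ⟨fc, hfc⟩ := hc
  subst hfa hfb hfc
  fin_cases j <;>
  · apply isAffine_of_eval
    intro t
    simp [shear, shearH, shearV, ev, Px, Py, Fin.sum_univ_succ, smul_eval,
      Matrix.cons_val_succ, two_smul, pderiv_one, pderiv_mul, pderiv_pow,
      pderiv_X_self, pderiv_X_of_ne]
    ring
end
end

section
/- The tensor Φ₁ = (1/8)[[0,0],[0,4−6y+2y³]] has normal-normal trace equal to the constant 1 on edge e₁ = (-1,1)×{-1} and equal to 0 on the other three edges of the square, vanishing effective shear force on all four edges, and vanishing tangential-normal corner jumps. -/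
open MvPolynomial

noncomputable section

/-- `Φ₁` has normal-normal trace `1` on `e₁` and `0` on the other edges, vanishing
effective shear forces, and vanishing corner jumps. -/
theorem stmt_9 :
    (let a : R2 := 0
     let b : R2 := 0
     let c : R2 := (1/8 : ℝ) • (C 4 - C 6 * Py + C 2 * Py ^ 3)
     (∀ t : ℝ, nnTrace a b c 0 t = 1) ∧
     (∀ j : Fin 4, j ≠ 0 → ∀ t : ℝ, nnTrace a b c j t = 0) ∧
     (∀ j : Fin 4, ∀ t : ℝ, shear a b c j t = 0) ∧
     (∀ j : Fin 4, cornerJump b j = 0)) := by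
  constructor
  · intro t
    simp [nnTrace, ev, Px, Py]
    ring
  refine ⟨?_, ?_, ?_⟩ <;>
  · intro j
    try intro hj
    fin_cases j <;> try exact absurd rfl hj
    all_goals
      try intro t
      simp_all [nnTrace, shear, cornerJump, shearH, shearV, ev, Px, Py]
      try ring
end
end

section
/- The tensor Φ₉ = (1/4)[[0,0],[0,(1−y)(y²−1)]] has effective shear force equal to the constant 1 on edge e₁ = (-1,1)×{-1} and 0 on the other edges, vanishing normal-normal traces on all four edges, and vanishing tangential-normal corner jumps. -/
open MvPolynomial

noncomputable section

/-- `Φ₉` has effective shear force `1` on `e₁` and `0` on the other edges, vanishing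
normal-normal traces, and vanishing corner jumps. -/
theorem stmt_10 :
    (let a : R2 := 0
     let b : R2 := 0
     let c : R2 := (1/4 : ℝ) • ((1 - Py) * (Py ^ 2 - 1))
     (∀ t : ℝ, shear a b c 0 t = 1) ∧
     (∀ j : Fin 4, j ≠ 0 → ∀ t : ℝ, shear a b c j t = 0) ∧
     (∀ j : Fin 4, ∀ t : ℝ, nnTrace a b c j t = 0) ∧
     (∀ j : Fin 4, cornerJump b j = 0)) := by
  refine ⟨fun t => ?_, fun j hj t => ?_, fun j t => ?_, fun j => ?_⟩
  · simp [shear, shearH, shearV, ev, Px, Py, smul_mul_assoc]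
    ring
  · fin_cases j <;> simp_all [shear, shearH, shearV, ev, Px, Py, Matrix.vecHead, Matrix.vecTail] <;> ring
  · fin_cases j <;> simp [nnTrace, ev, Px, Py, Matrix.vecHead, Matrix.vecTail] <;> ring
  · fin_cases j <;> simp [cornerJump, ev]
end
end

section
/- The tensor Φ₁₇ = (1/8)[[(1−x)(1−x²),(1−x)(1−y)],[(1−x)(1−y),(1−y)(1−y²)]] has vanishing normal-normal trace and vanishing effective shear force on all four edges of (-1,1)², and its tangential-normal trace jump equals 1 at the corner (−1,−1) and 0 at the other three corners. -/
open MvPolynomial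

noncomputable section

/-- `Φ₁₇` has vanishing normal-normal traces and effective shear forces on all edges,
and its tangential-normal corner jump is `1` at `(-1,-1)` and `0` at the other corners. -/
theorem stmt_11 :
    (let a : R2 := (1/8 : ℝ) • ((1 - Px) * (1 - Px ^ 2))
     let b : R2 := (1/8 : ℝ) • ((1 - Px) * (1 - Py))
     let c : R2 := (1/8 : ℝ) • ((1 - Py) * (1 - Py ^ 2))
     (∀ j : Fin 4, ∀ t : ℝ, nnTrace a b c j t = 0) ∧
     (∀ j : Fin 4, ∀ t : ℝ, shear a b c j t = 0) ∧
     cornerJump b 0 = 1 ∧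
     (∀ j : Fin 4, j ≠ 0 → cornerJump b j = 0)) := by
  refine ⟨?_, ?_, ?_, ?_⟩
  · intro j t
    fin_cases j <;>
      simp [nnTrace, ev, Px, Py, Matrix.cons_val_zero, Matrix.cons_val_one, Matrix.head_cons, Fin.isValue, Matrix.vecHead, Matrix.vecTail] <;> ring
  · intro j t
    fin_cases j <;>
      simp [shear, shearH, shearV, ev, Px, Py, pderiv_X, smul_eq_mul] <;> ring
  · simp [cornerJump, ev, Px, Py] <;> ring
  · intro j hj
    fin_cases j
    · exact absurd rfl hj
    all_goals simp [cornerJump, ev, Px, Py] <;> ring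
end
end

section
/- The 20 degrees of freedom on the reference square — the zeroth and first moments of the normal-normal traces on each of the four edges, the zeroth and first moments of the effective shear forces on each of the four edges, and the tangential-normal trace jumps at the four corners — are unisolvent for the 20-dimensional space X⁰: the linear map X⁰ → ℝ²⁰ sending a tensor to its degrees of freedom is a bijection. -/
open MvPolynomial

noncomputable section

/-- The linear Legendre polynomials `l₁(x)=x, l₂(y)=y, l₃(x)=-x, l₄(y)=-y` on the four
edges (arc length, positive orientation), as functions of the edge coordinate. -/
def leg : Fin 4 → ℝ → ℝ := ![fun t => t, fun t => t, fun t => -t, fun t => -t]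

/-- The 20 degrees of freedom of `M = [[a,b],[b,c]]`: zeroth and first moments of the
normal-normal traces and of the effective shear forces on the four edges, and the
tangential-normal corner jumps. -/
def dof (M : R2 × R2 × R2) : Fin 20 → ℝ :=
  fun i =>
    if h : (i : ℕ) < 4 then
      ∫ t in (-1 : ℝ)..1, nnTrace M.1 M.2.1 M.2.2 ⟨i, h⟩ t
    else if h : (i : ℕ) < 8 then
      ∫ t in (-1 : ℝ)..1, nnTrace M.1 M.2.1 M.2.2 ⟨i - 4, by omega⟩ t * leg ⟨i - 4, by omega⟩ t
    else if h : (i : ℕ) < 12 then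
      ∫ t in (-1 : ℝ)..1, shear M.1 M.2.1 M.2.2 ⟨i - 8, by omega⟩ t
    else if h : (i : ℕ) < 16 then
      ∫ t in (-1 : ℝ)..1, shear M.1 M.2.1 M.2.2 ⟨i - 12, by omega⟩ t * leg ⟨i - 12, by omega⟩ t
    else
      cornerJump M.2.1 ⟨i - 16, by omega⟩

def aP (a0 a1 a2 a3 a4 a5 : ℝ) : R2 :=
  C a0 + C a1 * Px + C a2 * Py + C a3 * (Px * Py) + C a4 * Px ^ 2 + C a5 * Px ^ 3
def bP (b0 b1 b2 b3 b4 b5 b6 b7 : ℝ) : R2 :=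
  C b0 + C b1 * Px + C b2 * Py + C b3 * Px ^ 2 + C b4 * (Px * Py) + C b5 * Py ^ 2
    + C b6 * (Px ^ 2 * Py) + C b7 * (Px * Py ^ 2)
def cP (c0 c1 c2 c3 c4 c5 : ℝ) : R2 :=
  C c0 + C c1 * Px + C c2 * Py + C c3 * (Px * Py) + C c4 * Py ^ 2 + C c5 * Py ^ 3

lemma ev_aP (a0 a1 a2 a3 a4 a5 x y : ℝ) :
    ev x y (aP a0 a1 a2 a3 a4 a5) = a0 + a1*x + a2*y + a3*(x*y) + a4*x^2 + a5*x^3 := by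
  simp [ev, aP, Px, Py]
lemma ev_bP (b0 b1 b2 b3 b4 b5 b6 b7 x y : ℝ) :
    ev x y (bP b0 b1 b2 b3 b4 b5 b6 b7)
      = b0 + b1*x + b2*y + b3*x^2 + b4*(x*y) + b5*y^2 + b6*(x^2*y) + b7*(x*y^2) := by
  simp [ev, bP, Px, Py]
lemma ev_cP (c0 c1 c2 c3 c4 c5 x y : ℝ) :
    ev x y (cP c0 c1 c2 c3 c4 c5) = c0 + c1*x + c2*y + c3*(x*y) + c4*y^2 + c5*y^3 := by
  simp [ev, cP, Px, Py]
lemma ev_shearH (b0 b1 b2 b3 b4 b5 b6 b7 c0 c1 c2 c3 c4 c5 x y : ℝ) :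
    ev x y (shearH (bP b0 b1 b2 b3 b4 b5 b6 b7) (cP c0 c1 c2 c3 c4 c5)) =
      2*(b1 + 2*b3*x + b4*y + 2*b6*(x*y) + b7*y^2) + (c2 + c3*x + 2*c4*y + 3*c5*y^2) := by
  simp [shearH, ev, bP, cP, Px, Py, pderiv_X, pderiv_mul, pderiv_pow, map_ofNat]
  ring
lemma ev_shearV (a0 a1 a2 a3 a4 a5 b0 b1 b2 b3 b4 b5 b6 b7 x y : ℝ) :
    ev x y (shearV (aP a0 a1 a2 a3 a4 a5) (bP b0 b1 b2 b3 b4 b5 b6 b7)) =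
      (a1 + a3*y + 2*a4*x + 3*a5*x^2) + 2*(b2 + b4*x + 2*b5*y + b6*x^2 + 2*b7*(x*y)) := by
  simp [shearV, ev, aP, bP, Px, Py, pderiv_X, pderiv_mul, pderiv_pow, map_ofNat]
  ring

lemma integ (A B C : ℝ) : (∫ t in (-1:ℝ)..1, (A + B*t + C*t^2)) = 2*A + 2/3*C := by
  have h1 : IntervalIntegrable (fun _ : ℝ => A) MeasureTheory.volume (-1) 1 :=
    Continuous.intervalIntegrable (by continuity) _ _
  have h2 : IntervalIntegrable (fun t : ℝ => B*t) MeasureTheory.volume (-1) 1 :=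
    Continuous.intervalIntegrable (by continuity) _ _
  have h3 : IntervalIntegrable (fun t : ℝ => C*t^2) MeasureTheory.volume (-1) 1 :=
    Continuous.intervalIntegrable (by continuity) _ _
  rw [intervalIntegral.integral_add (h1.add h2) h3, intervalIntegral.integral_add h1 h2,
    intervalIntegral.integral_const, intervalIntegral.integral_const_mul,
    intervalIntegral.integral_const_mul, integral_id, integral_pow]
  norm_num
  ring

lemma dof0 (a0 a1 a2 a3 a4 a5 b0 b1 b2 b3 b4 b5 b6 b7 c0 c1 c2 c3 c4 c5 : ℝ) :
    dof (aP a0 a1 a2 a3 a4 a5, bP b0 b1 b2 b3 b4 b5 b6 b7, cP c0 c1 c2 c3 c4 c5) (0 : Fin 20) = 2 * c0 + (-2) * c2 + 2 * c4 + (-2) * c5 := by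
  show (∫ t in (-1:ℝ)..1, ev t (-1) (cP c0 c1 c2 c3 c4 c5)) = _
  have hc : (∫ t in (-1:ℝ)..1, ev t (-1) (cP c0 c1 c2 c3 c4 c5))
      = ∫ t in (-1:ℝ)..1, ((1 * c0 + (-1) * c2 + 1 * c4 + (-1) * c5) + (1 * c1 + (-1) * c3)*t + (0)*t^2) := by
    apply intervalIntegral.integral_congr
    intro t _
    simp only [ev_aP, ev_bP, ev_cP, ev_shearH, ev_shearV]
    ring
  rw [hc, integ]
  ring

lemma dof1 (a0 a1 a2 a3 a4 a5 b0 b1 b2 b3 b4 b5 b6 b7 c0 c1 c2 c3 c4 c5 : ℝ) :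
    dof (aP a0 a1 a2 a3 a4 a5, bP b0 b1 b2 b3 b4 b5 b6 b7, cP c0 c1 c2 c3 c4 c5) (1 : Fin 20) = 2 * a0 + 2 * a1 + 2 * a4 + 2 * a5 := by
  show (∫ t in (-1:ℝ)..1, ev 1 t (aP a0 a1 a2 a3 a4 a5)) = _
  have hc : (∫ t in (-1:ℝ)..1, ev 1 t (aP a0 a1 a2 a3 a4 a5))
      = ∫ t in (-1:ℝ)..1, ((1 * a0 + 1 * a1 + 1 * a4 + 1 * a5) + (1 * a2 + 1 * a3)*t + (0)*t^2) := by
    apply intervalIntegral.integral_congr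
    intro t _
    simp only [ev_aP, ev_bP, ev_cP, ev_shearH, ev_shearV]
    ring
  rw [hc, integ]
  ring

lemma dof2 (a0 a1 a2 a3 a4 a5 b0 b1 b2 b3 b4 b5 b6 b7 c0 c1 c2 c3 c4 c5 : ℝ) :
    dof (aP a0 a1 a2 a3 a4 a5, bP b0 b1 b2 b3 b4 b5 b6 b7, cP c0 c1 c2 c3 c4 c5) (2 : Fin 20) = 2 * c0 + 2 * c2 + 2 * c4 + 2 * c5 := by
  show (∫ t in (-1:ℝ)..1, ev t 1 (cP c0 c1 c2 c3 c4 c5)) = _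
  have hc : (∫ t in (-1:ℝ)..1, ev t 1 (cP c0 c1 c2 c3 c4 c5))
      = ∫ t in (-1:ℝ)..1, ((1 * c0 + 1 * c2 + 1 * c4 + 1 * c5) + (1 * c1 + 1 * c3)*t + (0)*t^2) := by
    apply intervalIntegral.integral_congr
    intro t _
    simp only [ev_aP, ev_bP, ev_cP, ev_shearH, ev_shearV]
    ring
  rw [hc, integ]
  ring

lemma dof3 (a0 a1 a2 a3 a4 a5 b0 b1 b2 b3 b4 b5 b6 b7 c0 c1 c2 c3 c4 c5 : ℝ) :
    dof (aP a0 a1 a2 a3 a4 a5, bP b0 b1 b2 b3 b4 b5 b6 b7, cP c0 c1 c2 c3 c4 c5) (3 : Fin 20) = 2 * a0 + (-2) * a1 + 2 * a4 + (-2) * a5 := by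
  show (∫ t in (-1:ℝ)..1, ev (-1) t (aP a0 a1 a2 a3 a4 a5)) = _
  have hc : (∫ t in (-1:ℝ)..1, ev (-1) t (aP a0 a1 a2 a3 a4 a5))
      = ∫ t in (-1:ℝ)..1, ((1 * a0 + (-1) * a1 + 1 * a4 + (-1) * a5) + (1 * a2 + (-1) * a3)*t + (0)*t^2) := by
    apply intervalIntegral.integral_congr
    intro t _
    simp only [ev_aP, ev_bP, ev_cP, ev_shearH, ev_shearV]
    ring
  rw [hc, integ]
  ring

lemma dof4 (a0 a1 a2 a3 a4 a5 b0 b1 b2 b3 b4 b5 b6 b7 c0 c1 c2 c3 c4 c5 : ℝ) :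
    dof (aP a0 a1 a2 a3 a4 a5, bP b0 b1 b2 b3 b4 b5 b6 b7, cP c0 c1 c2 c3 c4 c5) (4 : Fin 20) = (2/3) * c1 + (-2/3) * c3 := by
  show (∫ t in (-1:ℝ)..1, ev t (-1) (cP c0 c1 c2 c3 c4 c5) * t) = _
  have hc : (∫ t in (-1:ℝ)..1, ev t (-1) (cP c0 c1 c2 c3 c4 c5) * t)
      = ∫ t in (-1:ℝ)..1, ((0) + (1 * c0 + (-1) * c2 + 1 * c4 + (-1) * c5)*t + (1 * c1 + (-1) * c3)*t^2) := by
    apply intervalIntegral.integral_congr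
    intro t _
    simp only [ev_aP, ev_bP, ev_cP, ev_shearH, ev_shearV]
    ring
  rw [hc, integ]
  ring

lemma dof5 (a0 a1 a2 a3 a4 a5 b0 b1 b2 b3 b4 b5 b6 b7 c0 c1 c2 c3 c4 c5 : ℝ) :
    dof (aP a0 a1 a2 a3 a4 a5, bP b0 b1 b2 b3 b4 b5 b6 b7, cP c0 c1 c2 c3 c4 c5) (5 : Fin 20) = (2/3) * a2 + (2/3) * a3 := by
  show (∫ t in (-1:ℝ)..1, ev 1 t (aP a0 a1 a2 a3 a4 a5) * t) = _
  have hc : (∫ t in (-1:ℝ)..1, ev 1 t (aP a0 a1 a2 a3 a4 a5) * t)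
      = ∫ t in (-1:ℝ)..1, ((0) + (1 * a0 + 1 * a1 + 1 * a4 + 1 * a5)*t + (1 * a2 + 1 * a3)*t^2) := by
    apply intervalIntegral.integral_congr
    intro t _
    simp only [ev_aP, ev_bP, ev_cP, ev_shearH, ev_shearV]
    ring
  rw [hc, integ]
  ring

lemma dof6 (a0 a1 a2 a3 a4 a5 b0 b1 b2 b3 b4 b5 b6 b7 c0 c1 c2 c3 c4 c5 : ℝ) :
    dof (aP a0 a1 a2 a3 a4 a5, bP b0 b1 b2 b3 b4 b5 b6 b7, cP c0 c1 c2 c3 c4 c5) (6 : Fin 20) = (-2/3) * c1 + (-2/3) * c3 := by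
  show (∫ t in (-1:ℝ)..1, ev t 1 (cP c0 c1 c2 c3 c4 c5) * -t) = _
  have hc : (∫ t in (-1:ℝ)..1, ev t 1 (cP c0 c1 c2 c3 c4 c5) * -t)
      = ∫ t in (-1:ℝ)..1, ((0) + ((-1) * c0 + (-1) * c2 + (-1) * c4 + (-1) * c5)*t + ((-1) * c1 + (-1) * c3)*t^2) := by
    apply intervalIntegral.integral_congr
    intro t _
    simp only [ev_aP, ev_bP, ev_cP, ev_shearH, ev_shearV]
    ring
  rw [hc, integ]
  ring

lemma dof7 (a0 a1 a2 a3 a4 a5 b0 b1 b2 b3 b4 b5 b6 b7 c0 c1 c2 c3 c4 c5 : ℝ) :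
    dof (aP a0 a1 a2 a3 a4 a5, bP b0 b1 b2 b3 b4 b5 b6 b7, cP c0 c1 c2 c3 c4 c5) (7 : Fin 20) = (-2/3) * a2 + (2/3) * a3 := by
  show (∫ t in (-1:ℝ)..1, ev (-1) t (aP a0 a1 a2 a3 a4 a5) * -t) = _
  have hc : (∫ t in (-1:ℝ)..1, ev (-1) t (aP a0 a1 a2 a3 a4 a5) * -t)
      = ∫ t in (-1:ℝ)..1, ((0) + ((-1) * a0 + 1 * a1 + (-1) * a4 + 1 * a5)*t + ((-1) * a2 + 1 * a3)*t^2) := by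
    apply intervalIntegral.integral_congr
    intro t _
    simp only [ev_aP, ev_bP, ev_cP, ev_shearH, ev_shearV]
    ring
  rw [hc, integ]
  ring

lemma dof8 (a0 a1 a2 a3 a4 a5 b0 b1 b2 b3 b4 b5 b6 b7 c0 c1 c2 c3 c4 c5 : ℝ) :
    dof (aP a0 a1 a2 a3 a4 a5, bP b0 b1 b2 b3 b4 b5 b6 b7, cP c0 c1 c2 c3 c4 c5) (8 : Fin 20) = (-4) * b1 + 4 * b4 + (-4) * b7 + (-2) * c2 + 4 * c4 + (-6) * c5 := by
  show (∫ t in (-1:ℝ)..1, -ev t (-1) (shearH (bP b0 b1 b2 b3 b4 b5 b6 b7) (cP c0 c1 c2 c3 c4 c5))) = _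
  have hc : (∫ t in (-1:ℝ)..1, -ev t (-1) (shearH (bP b0 b1 b2 b3 b4 b5 b6 b7) (cP c0 c1 c2 c3 c4 c5)))
      = ∫ t in (-1:ℝ)..1, (((-2) * b1 + 2 * b4 + (-2) * b7 + (-1) * c2 + 2 * c4 + (-3) * c5) + ((-4) * b3 + 4 * b6 + (-1) * c3)*t + (0)*t^2) := by
    apply intervalIntegral.integral_congr
    intro t _
    simp only [ev_aP, ev_bP, ev_cP, ev_shearH, ev_shearV]
    ring
  rw [hc, integ]
  ring

lemma dof9 (a0 a1 a2 a3 a4 a5 b0 b1 b2 b3 b4 b5 b6 b7 c0 c1 c2 c3 c4 c5 : ℝ) :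
    dof (aP a0 a1 a2 a3 a4 a5, bP b0 b1 b2 b3 b4 b5 b6 b7, cP c0 c1 c2 c3 c4 c5) (9 : Fin 20) = 2 * a1 + 4 * a4 + 6 * a5 + 4 * b2 + 4 * b4 + 4 * b6 := by
  show (∫ t in (-1:ℝ)..1, ev 1 t (shearV (aP a0 a1 a2 a3 a4 a5) (bP b0 b1 b2 b3 b4 b5 b6 b7))) = _
  have hc : (∫ t in (-1:ℝ)..1, ev 1 t (shearV (aP a0 a1 a2 a3 a4 a5) (bP b0 b1 b2 b3 b4 b5 b6 b7)))
      = ∫ t in (-1:ℝ)..1, ((1 * a1 + 2 * a4 + 3 * a5 + 2 * b2 + 2 * b4 + 2 * b6) + (1 * a3 + 4 * b5 + 4 * b7)*t + (0)*t^2) := by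
    apply intervalIntegral.integral_congr
    intro t _
    simp only [ev_aP, ev_bP, ev_cP, ev_shearH, ev_shearV]
    ring
  rw [hc, integ]
  ring

lemma dof10 (a0 a1 a2 a3 a4 a5 b0 b1 b2 b3 b4 b5 b6 b7 c0 c1 c2 c3 c4 c5 : ℝ) :
    dof (aP a0 a1 a2 a3 a4 a5, bP b0 b1 b2 b3 b4 b5 b6 b7, cP c0 c1 c2 c3 c4 c5) (10 : Fin 20) = 4 * b1 + 4 * b4 + 4 * b7 + 2 * c2 + 4 * c4 + 6 * c5 := by
  show (∫ t in (-1:ℝ)..1, ev t 1 (shearH (bP b0 b1 b2 b3 b4 b5 b6 b7) (cP c0 c1 c2 c3 c4 c5))) = _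
  have hc : (∫ t in (-1:ℝ)..1, ev t 1 (shearH (bP b0 b1 b2 b3 b4 b5 b6 b7) (cP c0 c1 c2 c3 c4 c5)))
      = ∫ t in (-1:ℝ)..1, ((2 * b1 + 2 * b4 + 2 * b7 + 1 * c2 + 2 * c4 + 3 * c5) + (4 * b3 + 4 * b6 + 1 * c3)*t + (0)*t^2) := by
    apply intervalIntegral.integral_congr
    intro t _
    simp only [ev_aP, ev_bP, ev_cP, ev_shearH, ev_shearV]
    ring
  rw [hc, integ]
  ring

lemma dof11 (a0 a1 a2 a3 a4 a5 b0 b1 b2 b3 b4 b5 b6 b7 c0 c1 c2 c3 c4 c5 : ℝ) :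
    dof (aP a0 a1 a2 a3 a4 a5, bP b0 b1 b2 b3 b4 b5 b6 b7, cP c0 c1 c2 c3 c4 c5) (11 : Fin 20) = (-2) * a1 + 4 * a4 + (-6) * a5 + (-4) * b2 + 4 * b4 + (-4) * b6 := by
  show (∫ t in (-1:ℝ)..1, -ev (-1) t (shearV (aP a0 a1 a2 a3 a4 a5) (bP b0 b1 b2 b3 b4 b5 b6 b7))) = _
  have hc : (∫ t in (-1:ℝ)..1, -ev (-1) t (shearV (aP a0 a1 a2 a3 a4 a5) (bP b0 b1 b2 b3 b4 b5 b6 b7)))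
      = ∫ t in (-1:ℝ)..1, (((-1) * a1 + 2 * a4 + (-3) * a5 + (-2) * b2 + 2 * b4 + (-2) * b6) + ((-1) * a3 + (-4) * b5 + 4 * b7)*t + (0)*t^2) := by
    apply intervalIntegral.integral_congr
    intro t _
    simp only [ev_aP, ev_bP, ev_cP, ev_shearH, ev_shearV]
    ring
  rw [hc, integ]
  ring

lemma dof12 (a0 a1 a2 a3 a4 a5 b0 b1 b2 b3 b4 b5 b6 b7 c0 c1 c2 c3 c4 c5 : ℝ) :
    dof (aP a0 a1 a2 a3 a4 a5, bP b0 b1 b2 b3 b4 b5 b6 b7, cP c0 c1 c2 c3 c4 c5) (12 : Fin 20) = (-8/3) * b3 + (8/3) * b6 + (-2/3) * c3 := by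
  show (∫ t in (-1:ℝ)..1, -ev t (-1) (shearH (bP b0 b1 b2 b3 b4 b5 b6 b7) (cP c0 c1 c2 c3 c4 c5)) * t) = _
  have hc : (∫ t in (-1:ℝ)..1, -ev t (-1) (shearH (bP b0 b1 b2 b3 b4 b5 b6 b7) (cP c0 c1 c2 c3 c4 c5)) * t)
      = ∫ t in (-1:ℝ)..1, ((0) + ((-2) * b1 + 2 * b4 + (-2) * b7 + (-1) * c2 + 2 * c4 + (-3) * c5)*t + ((-4) * b3 + 4 * b6 + (-1) * c3)*t^2) := by
    apply intervalIntegral.integral_congr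
    intro t _
    simp only [ev_aP, ev_bP, ev_cP, ev_shearH, ev_shearV]
    ring
  rw [hc, integ]
  ring

lemma dof13 (a0 a1 a2 a3 a4 a5 b0 b1 b2 b3 b4 b5 b6 b7 c0 c1 c2 c3 c4 c5 : ℝ) :
    dof (aP a0 a1 a2 a3 a4 a5, bP b0 b1 b2 b3 b4 b5 b6 b7, cP c0 c1 c2 c3 c4 c5) (13 : Fin 20) = (2/3) * a3 + (8/3) * b5 + (8/3) * b7 := by
  show (∫ t in (-1:ℝ)..1, ev 1 t (shearV (aP a0 a1 a2 a3 a4 a5) (bP b0 b1 b2 b3 b4 b5 b6 b7)) * t) = _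
  have hc : (∫ t in (-1:ℝ)..1, ev 1 t (shearV (aP a0 a1 a2 a3 a4 a5) (bP b0 b1 b2 b3 b4 b5 b6 b7)) * t)
      = ∫ t in (-1:ℝ)..1, ((0) + (1 * a1 + 2 * a4 + 3 * a5 + 2 * b2 + 2 * b4 + 2 * b6)*t + (1 * a3 + 4 * b5 + 4 * b7)*t^2) := by
    apply intervalIntegral.integral_congr
    intro t _
    simp only [ev_aP, ev_bP, ev_cP, ev_shearH, ev_shearV]
    ring
  rw [hc, integ]
  ring

lemma dof14 (a0 a1 a2 a3 a4 a5 b0 b1 b2 b3 b4 b5 b6 b7 c0 c1 c2 c3 c4 c5 : ℝ) :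
    dof (aP a0 a1 a2 a3 a4 a5, bP b0 b1 b2 b3 b4 b5 b6 b7, cP c0 c1 c2 c3 c4 c5) (14 : Fin 20) = (-8/3) * b3 + (-8/3) * b6 + (-2/3) * c3 := by
  show (∫ t in (-1:ℝ)..1, ev t 1 (shearH (bP b0 b1 b2 b3 b4 b5 b6 b7) (cP c0 c1 c2 c3 c4 c5)) * -t) = _
  have hc : (∫ t in (-1:ℝ)..1, ev t 1 (shearH (bP b0 b1 b2 b3 b4 b5 b6 b7) (cP c0 c1 c2 c3 c4 c5)) * -t)
      = ∫ t in (-1:ℝ)..1, ((0) + ((-2) * b1 + (-2) * b4 + (-2) * b7 + (-1) * c2 + (-2) * c4 + (-3) * c5)*t + ((-4) * b3 + (-4) * b6 + (-1) * c3)*t^2) := by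
    apply intervalIntegral.integral_congr
    intro t _
    simp only [ev_aP, ev_bP, ev_cP, ev_shearH, ev_shearV]
    ring
  rw [hc, integ]
  ring

lemma dof15 (a0 a1 a2 a3 a4 a5 b0 b1 b2 b3 b4 b5 b6 b7 c0 c1 c2 c3 c4 c5 : ℝ) :
    dof (aP a0 a1 a2 a3 a4 a5, bP b0 b1 b2 b3 b4 b5 b6 b7, cP c0 c1 c2 c3 c4 c5) (15 : Fin 20) = (2/3) * a3 + (8/3) * b5 + (-8/3) * b7 := by
  show (∫ t in (-1:ℝ)..1, -ev (-1) t (shearV (aP a0 a1 a2 a3 a4 a5) (bP b0 b1 b2 b3 b4 b5 b6 b7)) * -t) = _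
  have hc : (∫ t in (-1:ℝ)..1, -ev (-1) t (shearV (aP a0 a1 a2 a3 a4 a5) (bP b0 b1 b2 b3 b4 b5 b6 b7)) * -t)
      = ∫ t in (-1:ℝ)..1, ((0) + (1 * a1 + (-2) * a4 + 3 * a5 + 2 * b2 + (-2) * b4 + 2 * b6)*t + (1 * a3 + 4 * b5 + (-4) * b7)*t^2) := by
    apply intervalIntegral.integral_congr
    intro t _
    simp only [ev_aP, ev_bP, ev_cP, ev_shearH, ev_shearV]
    ring
  rw [hc, integ]
  ring

lemma dof16 (a0 a1 a2 a3 a4 a5 b0 b1 b2 b3 b4 b5 b6 b7 c0 c1 c2 c3 c4 c5 : ℝ) :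
    dof (aP a0 a1 a2 a3 a4 a5, bP b0 b1 b2 b3 b4 b5 b6 b7, cP c0 c1 c2 c3 c4 c5) (16 : Fin 20) = 2 * b0 + (-2) * b1 + (-2) * b2 + 2 * b3 + 2 * b4 + 2 * b5 + (-2) * b6 + (-2) * b7 := by
  show 2 * ev (-1) (-1) (bP b0 b1 b2 b3 b4 b5 b6 b7) = _
  rw [ev_bP]
  ring

lemma dof17 (a0 a1 a2 a3 a4 a5 b0 b1 b2 b3 b4 b5 b6 b7 c0 c1 c2 c3 c4 c5 : ℝ) :
    dof (aP a0 a1 a2 a3 a4 a5, bP b0 b1 b2 b3 b4 b5 b6 b7, cP c0 c1 c2 c3 c4 c5) (17 : Fin 20) = (-2) * b0 + (-2) * b1 + 2 * b2 + (-2) * b3 + 2 * b4 + (-2) * b5 + 2 * b6 + (-2) * b7 := by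
  show -(2 * ev 1 (-1) (bP b0 b1 b2 b3 b4 b5 b6 b7)) = _
  rw [ev_bP]
  ring

lemma dof18 (a0 a1 a2 a3 a4 a5 b0 b1 b2 b3 b4 b5 b6 b7 c0 c1 c2 c3 c4 c5 : ℝ) :
    dof (aP a0 a1 a2 a3 a4 a5, bP b0 b1 b2 b3 b4 b5 b6 b7, cP c0 c1 c2 c3 c4 c5) (18 : Fin 20) = 2 * b0 + 2 * b1 + 2 * b2 + 2 * b3 + 2 * b4 + 2 * b5 + 2 * b6 + 2 * b7 := by
  show 2 * ev 1 1 (bP b0 b1 b2 b3 b4 b5 b6 b7) = _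
  rw [ev_bP]
  ring

lemma dof19 (a0 a1 a2 a3 a4 a5 b0 b1 b2 b3 b4 b5 b6 b7 c0 c1 c2 c3 c4 c5 : ℝ) :
    dof (aP a0 a1 a2 a3 a4 a5, bP b0 b1 b2 b3 b4 b5 b6 b7, cP c0 c1 c2 c3 c4 c5) (19 : Fin 20) = (-2) * b0 + 2 * b1 + (-2) * b2 + (-2) * b3 + 2 * b4 + (-2) * b5 + (-2) * b6 + 2 * b7 := by
  show -(2 * ev (-1) 1 (bP b0 b1 b2 b3 b4 b5 b6 b7)) = _
  rw [ev_bP]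
  ring


lemma mem_of_gen {S : Set R2} (r : ℝ) (m : R2) (hm : m ∈ S) : C r * m ∈ Submodule.span ℝ S := by
  rw [← smul_eq_C_mul]; exact Submodule.smul_mem _ r (Submodule.subset_span hm)

lemma aP_mem (a0 a1 a2 a3 a4 a5 : ℝ) : aP a0 a1 a2 a3 a4 a5 ∈ Aspace := by
  rw [aP, Aspace, show (C a0 : R2) = C a0 * 1 from (mul_one _).symm]
  refine add_mem (add_mem (add_mem (add_mem (add_mem (mem_of_gen _ _ ?_) (mem_of_gen _ _ ?_))
    (mem_of_gen _ _ ?_)) (mem_of_gen _ _ ?_)) (mem_of_gen _ _ ?_)) (mem_of_gen _ _ ?_) <;> simp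

lemma bP_mem (b0 b1 b2 b3 b4 b5 b6 b7 : ℝ) : bP b0 b1 b2 b3 b4 b5 b6 b7 ∈ Bspace := by
  rw [bP, Bspace, show (C b0 : R2) = C b0 * 1 from (mul_one _).symm]
  refine add_mem (add_mem (add_mem (add_mem (add_mem (add_mem (add_mem (mem_of_gen _ _ ?_)
    (mem_of_gen _ _ ?_)) (mem_of_gen _ _ ?_)) (mem_of_gen _ _ ?_)) (mem_of_gen _ _ ?_))
    (mem_of_gen _ _ ?_)) (mem_of_gen _ _ ?_)) (mem_of_gen _ _ ?_) <;> simp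

lemma cP_mem (c0 c1 c2 c3 c4 c5 : ℝ) : cP c0 c1 c2 c3 c4 c5 ∈ Cspace := by
  rw [cP, Cspace, show (C c0 : R2) = C c0 * 1 from (mul_one _).symm]
  refine add_mem (add_mem (add_mem (add_mem (add_mem (mem_of_gen _ _ ?_) (mem_of_gen _ _ ?_))
    (mem_of_gen _ _ ?_)) (mem_of_gen _ _ ?_)) (mem_of_gen _ _ ?_)) (mem_of_gen _ _ ?_) <;> simp

lemma decompA {p : R2} (hp : p ∈ Aspace) : ∃ a0 a1 a2 a3 a4 a5 : ℝ, p = aP a0 a1 a2 a3 a4 a5 := by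
  simp only [Aspace, Submodule.mem_span_insert, Submodule.mem_span_singleton] at hp
  obtain ⟨r0, _, ⟨r1, _, ⟨r2, _, ⟨r3, _, ⟨r4, _, ⟨r5, rfl⟩, rfl⟩, rfl⟩, rfl⟩, rfl⟩, rfl⟩ := hp
  exact ⟨r0, r1, r2, r3, r4, r5, by simp only [aP, smul_eq_C_mul]; ring⟩

lemma decompB {p : R2} (hp : p ∈ Bspace) :
    ∃ b0 b1 b2 b3 b4 b5 b6 b7 : ℝ, p = bP b0 b1 b2 b3 b4 b5 b6 b7 := by
  simp only [Bspace, Submodule.mem_span_insert, Submodule.mem_span_singleton] at hp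
  obtain ⟨r0, _, ⟨r1, _, ⟨r2, _, ⟨r3, _, ⟨r4, _, ⟨r5, _, ⟨r6, _, ⟨r7, rfl⟩, rfl⟩, rfl⟩, rfl⟩,
    rfl⟩, rfl⟩, rfl⟩, rfl⟩ := hp
  exact ⟨r0, r1, r2, r3, r4, r5, r6, r7, by simp only [bP, smul_eq_C_mul]; ring⟩

lemma decompC {p : R2} (hp : p ∈ Cspace) : ∃ c0 c1 c2 c3 c4 c5 : ℝ, p = cP c0 c1 c2 c3 c4 c5 := by
  simp only [Cspace, Submodule.mem_span_insert, Submodule.mem_span_singleton] at hp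
  obtain ⟨r0, _, ⟨r1, _, ⟨r2, _, ⟨r3, _, ⟨r4, _, ⟨r5, rfl⟩, rfl⟩, rfl⟩, rfl⟩, rfl⟩, rfl⟩ := hp
  exact ⟨r0, r1, r2, r3, r4, r5, by simp only [cP, smul_eq_C_mul]; ring⟩

lemma funext20 {f g : Fin 20 → ℝ} (h0 : f 0 = g 0) (h1 : f 1 = g 1) (h2 : f 2 = g 2)
    (h3 : f 3 = g 3) (h4 : f 4 = g 4) (h5 : f 5 = g 5) (h6 : f 6 = g 6) (h7 : f 7 = g 7)
    (h8 : f 8 = g 8) (h9 : f 9 = g 9) (h10 : f 10 = g 10) (h11 : f 11 = g 11)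
    (h12 : f 12 = g 12) (h13 : f 13 = g 13) (h14 : f 14 = g 14) (h15 : f 15 = g 15)
    (h16 : f 16 = g 16) (h17 : f 17 = g 17) (h18 : f 18 = g 18) (h19 : f 19 = g 19) : f = g := by
  funext i
  fin_cases i <;> assumption

theorem stmt_main : Function.Bijective (fun M : X0 => dof (M : R2 × R2 × R2)) := by
  constructor
  · intro M N h
    obtain ⟨⟨a, b, c⟩, hM⟩ := M
    obtain ⟨⟨a', b', c'⟩, hN⟩ := N
    simp only [X0, Submodule.mem_prod] at hM hN
    obtain ⟨a0, a1, a2, a3, a4, a5, rfl⟩ := decompA hM.1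
    obtain ⟨b0, b1, b2, b3, b4, b5, b6, b7, rfl⟩ := decompB hM.2.1
    obtain ⟨c0, c1, c2, c3, c4, c5, rfl⟩ := decompC hM.2.2
    obtain ⟨a0', a1', a2', a3', a4', a5', rfl⟩ := decompA hN.1
    obtain ⟨b0', b1', b2', b3', b4', b5', b6', b7', rfl⟩ := decompB hN.2.1
    obtain ⟨c0', c1', c2', c3', c4', c5', rfl⟩ := decompC hN.2.2
    have h' : dof (aP a0 a1 a2 a3 a4 a5, bP b0 b1 b2 b3 b4 b5 b6 b7, cP c0 c1 c2 c3 c4 c5) = dof (aP a0' a1' a2' a3' a4' a5', bP b0' b1' b2' b3' b4' b5' b6' b7', cP c0' c1' c2' c3' c4' c5') := h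
    have h0 := congrFun h' (0 : Fin 20)
    rw [dof0, dof0] at h0
    have h1 := congrFun h' (1 : Fin 20)
    rw [dof1, dof1] at h1
    have h2 := congrFun h' (2 : Fin 20)
    rw [dof2, dof2] at h2
    have h3 := congrFun h' (3 : Fin 20)
    rw [dof3, dof3] at h3
    have h4 := congrFun h' (4 : Fin 20)
    rw [dof4, dof4] at h4
    have h5 := congrFun h' (5 : Fin 20)
    rw [dof5, dof5] at h5
    have h6 := congrFun h' (6 : Fin 20)
    rw [dof6, dof6] at h6
    have h7 := congrFun h' (7 : Fin 20)
    rw [dof7, dof7] at h7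
    have h8 := congrFun h' (8 : Fin 20)
    rw [dof8, dof8] at h8
    have h9 := congrFun h' (9 : Fin 20)
    rw [dof9, dof9] at h9
    have h10 := congrFun h' (10 : Fin 20)
    rw [dof10, dof10] at h10
    have h11 := congrFun h' (11 : Fin 20)
    rw [dof11, dof11] at h11
    have h12 := congrFun h' (12 : Fin 20)
    rw [dof12, dof12] at h12
    have h13 := congrFun h' (13 : Fin 20)
    rw [dof13, dof13] at h13
    have h14 := congrFun h' (14 : Fin 20)
    rw [dof14, dof14] at h14
    have h15 := congrFun h' (15 : Fin 20)
    rw [dof15, dof15] at h15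
    have h16 := congrFun h' (16 : Fin 20)
    rw [dof16, dof16] at h16
    have h17 := congrFun h' (17 : Fin 20)
    rw [dof17, dof17] at h17
    have h18 := congrFun h' (18 : Fin 20)
    rw [dof18, dof18] at h18
    have h19 := congrFun h' (19 : Fin 20)
    rw [dof19, dof19] at h19
    have e0 : a0 = a0' := by linear_combination (1/4) * h1 + (1/4) * h3 + (-1/8) * h9 + (-1/8) * h11 + (1/8) * h16 + (1/8) * h17 + (1/8) * h18 + (1/8) * h19
    have e1 : a1 = a1' := by linear_combination (3/8) * h1 + (-3/8) * h3 + (-1/8) * h9 + (1/8) * h11 + (-1/8) * h16 + (1/8) * h17 + (1/8) * h18 + (-1/8) * h19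
    have e2 : a2 = a2' := by linear_combination (3/4) * h5 + (-3/4) * h7
    have e3 : a3 = a3' := by linear_combination (3/4) * h5 + (3/4) * h7
    have e4 : a4 = a4' := by linear_combination (1/8) * h9 + (1/8) * h11 + (-1/8) * h16 + (-1/8) * h17 + (-1/8) * h18 + (-1/8) * h19
    have e5 : a5 = a5' := by linear_combination (-1/8) * h1 + (1/8) * h3 + (1/8) * h9 + (-1/8) * h11 + (1/8) * h16 + (-1/8) * h17 + (-1/8) * h18 + (1/8) * h19
    have e6 : b0 = b0' := by linear_combination (-3/16) * h4 + (3/16) * h5 + (-3/16) * h6 + (3/16) * h7 + (3/16) * h12 + (-3/16) * h13 + (3/16) * h14 + (-3/16) * h15 + (1/8) * h16 + (-1/8) * h17 + (1/8) * h18 + (-1/8) * h19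
    have e7 : b1 = b1' := by linear_combination (-3/16) * h13 + (3/16) * h15 + (-1/8) * h16 + (-1/8) * h17 + (1/8) * h18 + (1/8) * h19
    have e8 : b2 = b2' := by linear_combination (-3/16) * h12 + (3/16) * h14 + (-1/8) * h16 + (1/8) * h17 + (1/8) * h18 + (-1/8) * h19
    have e9 : b3 = b3' := by linear_combination (3/16) * h4 + (3/16) * h6 + (-3/16) * h12 + (-3/16) * h14
    have e10 : b4 = b4' := by linear_combination (1/8) * h16 + (1/8) * h17 + (1/8) * h18 + (1/8) * h19
    have e11 : b5 = b5' := by linear_combination (-3/16) * h5 + (-3/16) * h7 + (3/16) * h13 + (3/16) * h15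
    have e12 : b6 = b6' := by linear_combination (3/16) * h12 + (-3/16) * h14
    have e13 : b7 = b7' := by linear_combination (3/16) * h13 + (-3/16) * h15
    have e14 : c0 = c0' := by linear_combination (1/4) * h0 + (1/4) * h2 + (-1/8) * h8 + (-1/8) * h10 + (1/8) * h16 + (1/8) * h17 + (1/8) * h18 + (1/8) * h19
    have e15 : c1 = c1' := by linear_combination (3/4) * h4 + (-3/4) * h6
    have e16 : c2 = c2' := by linear_combination (-3/8) * h0 + (3/8) * h2 + (1/8) * h8 + (-1/8) * h10 + (-1/8) * h16 + (-1/8) * h17 + (1/8) * h18 + (1/8) * h19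
    have e17 : c3 = c3' := by linear_combination (-3/4) * h4 + (-3/4) * h6
    have e18 : c4 = c4' := by linear_combination (1/8) * h8 + (1/8) * h10 + (-1/8) * h16 + (-1/8) * h17 + (-1/8) * h18 + (-1/8) * h19
    have e19 : c5 = c5' := by linear_combination (1/8) * h0 + (-1/8) * h2 + (-1/8) * h8 + (1/8) * h10 + (1/8) * h16 + (1/8) * h17 + (-1/8) * h18 + (-1/8) * h19
    subst e0 e1 e2 e3 e4 e5 e6 e7 e8 e9 e10 e11 e12 e13 e14 e15 e16 e17 e18 e19
    rfl
  · intro v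
    refine ⟨⟨(aP ((1/4) * v 1 + (1/4) * v 3 + (-1/8) * v 9 + (-1/8) * v 11 + (1/8) * v 16 + (1/8) * v 17 + (1/8) * v 18 + (1/8) * v 19) ((3/8) * v 1 + (-3/8) * v 3 + (-1/8) * v 9 + (1/8) * v 11 + (-1/8) * v 16 + (1/8) * v 17 + (1/8) * v 18 + (-1/8) * v 19) ((3/4) * v 5 + (-3/4) * v 7) ((3/4) * v 5 + (3/4) * v 7) ((1/8) * v 9 + (1/8) * v 11 + (-1/8) * v 16 + (-1/8) * v 17 + (-1/8) * v 18 + (-1/8) * v 19) ((-1/8) * v 1 + (1/8) * v 3 + (1/8) * v 9 + (-1/8) * v 11 + (1/8) * v 16 + (-1/8) * v 17 + (-1/8) * v 18 + (1/8) * v 19), bP ((-3/16) * v 4 + (3/16) * v 5 + (-3/16) * v 6 + (3/16) * v 7 + (3/16) * v 12 + (-3/16) * v 13 + (3/16) * v 14 + (-3/16) * v 15 + (1/8) * v 16 + (-1/8) * v 17 + (1/8) * v 18 + (-1/8) * v 19) ((-3/16) * v 13 + (3/16) * v 15 + (-1/8) * v 16 + (-1/8) * v 17 + (1/8) * v 18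 + (1/8) * v 19) ((-3/16) * v 12 + (3/16) * v 14 + (-1/8) * v 16 + (1/8) * v 17 + (1/8) * v 18 + (-1/8) * v 19) ((3/16) * v 4 + (3/16) * v 6 + (-3/16) * v 12 + (-3/16) * v 14) ((1/8) * v 16 + (1/8) * v 17 + (1/8) * v 18 + (1/8) * v 19) ((-3/16) * v 5 + (-3/16) * v 7 + (3/16) * v 13 + (3/16) * v 15) ((3/16) * v 12 + (-3/16) * v 14) ((3/16) * v 13 + (-3/16) * v 15), cP ((1/4) * v 0 + (1/4) * v 2 + (-1/8) * v 8 + (-1/8) * v 10 + (1/8) * v 16 + (1/8) * v 17 + (1/8) * v 18 + (1/8) * v 19) ((3/4) * v 4 + (-3/4) * v 6) ((-3/8) * v 0 + (3/8) * v 2 + (1/8) * v 8 + (-1/8) * v 10 + (-1/8) * v 16 + (-1/8) * v 17 + (1/8) * v 18 + (1/8) * v 19) ((-3/4) * v 4 + (-3/4) * v 6) ((1/8) * v 8 + (1/8) * v 10 + (-1/8) * v 16 + (-1/8) * v 17 + (-1/8) * v 18 + (-1/8) * v 19) ((1/8) * v 0 + (-1/8) * v 2 + (-1/8) * v 8 +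 (1/8) * v 10 + (1/8) * v 16 + (1/8) * v 17 + (-1/8) * v 18 + (-1/8) * v 19)),
      Submodule.mem_prod.mpr ⟨aP_mem _ _ _ _ _ _,
        Submodule.mem_prod.mpr ⟨bP_mem _ _ _ _ _ _ _ _, cP_mem _ _ _ _ _ _⟩⟩⟩, ?_⟩
    show dof (aP ((1/4) * v 1 + (1/4) * v 3 + (-1/8) * v 9 + (-1/8) * v 11 + (1/8) * v 16 + (1/8) * v 17 + (1/8) * v 18 + (1/8) * v 19) ((3/8) * v 1 + (-3/8) * v 3 + (-1/8) * v 9 + (1/8) * v 11 + (-1/8) * v 16 + (1/8) * v 17 + (1/8) * v 18 + (-1/8) * v 19) ((3/4) * v 5 + (-3/4) * v 7) ((3/4) * v 5 + (3/4) * v 7) ((1/8) * v 9 + (1/8) * v 11 + (-1/8) * v 16 + (-1/8) * v 17 + (-1/8) * v 18 + (-1/8) * v 19) ((-1/8) * v 1 + (1/8) * v 3 + (1/8) * v 9 + (-1/8) * v 11 + (1/8) * v 16 + (-1/8) * v 17 + (-1/8) * v 18 + (1/8) * v 19), bP ((-3/16) * v 4 + (3/16) * v 5 + (-3/16) * v 6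 + (3/16) * v 7 + (3/16) * v 12 + (-3/16) * v 13 + (3/16) * v 14 + (-3/16) * v 15 + (1/8) * v 16 + (-1/8) * v 17 + (1/8) * v 18 + (-1/8) * v 19) ((-3/16) * v 13 + (3/16) * v 15 + (-1/8) * v 16 + (-1/8) * v 17 + (1/8) * v 18 + (1/8) * v 19) ((-3/16) * v 12 + (3/16) * v 14 + (-1/8) * v 16 + (1/8) * v 17 + (1/8) * v 18 + (-1/8) * v 19) ((3/16) * v 4 + (3/16) * v 6 + (-3/16) * v 12 + (-3/16) * v 14) ((1/8) * v 16 + (1/8) * v 17 + (1/8) * v 18 + (1/8) * v 19) ((-3/16) * v 5 + (-3/16) * v 7 + (3/16) * v 13 + (3/16) * v 15) ((3/16) * v 12 + (-3/16) * v 14) ((3/16) * v 13 + (-3/16) * v 15), cP ((1/4) * v 0 + (1/4) * v 2 + (-1/8) * v 8 + (-1/8) * v 10 + (1/8) * v 16 + (1/8) * v 17 + (1/8) * v 18 + (1/8) * v 19) ((3/4) * v 4 + (-3/4) * v 6) ((-3/8) * v 0 + (3/8) * v 2 + (1/8) * v 8 + (-1/8) * v 10 + (-1/8) * v 16 + (-1/8)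 * v 17 + (1/8) * v 18 + (1/8) * v 19) ((-3/4) * v 4 + (-3/4) * v 6) ((1/8) * v 8 + (1/8) * v 10 + (-1/8) * v 16 + (-1/8) * v 17 + (-1/8) * v 18 + (-1/8) * v 19) ((1/8) * v 0 + (-1/8) * v 2 + (-1/8) * v 8 + (1/8) * v 10 + (1/8) * v 16 + (1/8) * v 17 + (-1/8) * v 18 + (-1/8) * v 19)) = v
    refine funext20 ?_ ?_ ?_ ?_ ?_ ?_ ?_ ?_ ?_ ?_ ?_ ?_ ?_ ?_ ?_ ?_ ?_ ?_ ?_ ?_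
    · rw [dof0]; ring
    · rw [dof1]; ring
    · rw [dof2]; ring
    · rw [dof3]; ring
    · rw [dof4]; ring
    · rw [dof5]; ring
    · rw [dof6]; ring
    · rw [dof7]; ring
    · rw [dof8]; ring
    · rw [dof9]; ring
    · rw [dof10]; ring
    · rw [dof11]; ring
    · rw [dof12]; ring
    · rw [dof13]; ring
    · rw [dof14]; ring
    · rw [dof15]; ring
    · rw [dof16]; ring
    · rw [dof17]; ring
    · rw [dof18]; ring
    · rw [dof19]; ring



/-- Unisolvency: the map sending a tensor in `X⁰` to its 20 degrees of freedom is a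
bijection onto `ℝ²⁰`. -/
theorem stmt_12 : Function.Bijective (fun M : X0 => dof (M : R2 × R2 × R2)) := stmt_main
end
end

section
/- Under the Piola–Kirchhoff transformation M∘F = B M̂ Bᵀ / |det B| for the affine map F(x̂) = B x̂ + a with invertible B, the identity |det B| · (div div M)∘F = div div M̂ holds for any twice continuously differentiable symmetric tensor field M̂. -/
/-!
Write `F x = B x + a` and `G = F⁻¹`, so that `G y = C y - C a` with `C = B⁻¹`. The transformation
rule says `M = |det B|⁻¹ • B (M̂ ∘ G) Bᵀ`. Differentiating twice, the Hessian of each entry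
`M̂ₖₗ ∘ G` is `Cᵀ (Hess M̂ₖₗ ∘ G) C`, and contracting with `B ⊗ B` in `div div` yields
`Σₖₗ (Bᵀ Cᵀ Hess M̂ₖₗ C B)ₖₗ = Σₖₗ (Hess M̂ₖₗ)ₖₗ = div div M̂`.
-/

open Matrix

noncomputable section

/-- Partial derivative in direction `i`. -/
def pd (i : Fin 2) (f : (Fin 2 → ℝ) → ℝ) : (Fin 2 → ℝ) → ℝ :=
  fun x => fderiv ℝ f x (Pi.single i 1)

/-- `div div N = Σ_{i,j} ∂ᵢ∂ⱼ N_{ij}` for a matrix-valued field `N`. -/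
def divdivT (N : (Fin 2 → ℝ) → Matrix (Fin 2) (Fin 2) ℝ) : (Fin 2 → ℝ) → ℝ :=
  fun x => ∑ i : Fin 2, ∑ j : Fin 2, pd i (pd j (fun y => N y i j)) x

lemma pd_const_smul (c : ℝ) (f : (Fin 2 → ℝ) → ℝ) (i : Fin 2) : pd i (c • f) = c • pd i f := by
  ext x
  simp [pd, fderiv_const_smul_field]

lemma pd_sum_mul {ι : Type*} [Fintype ι] (w : ι → ℝ) (f : ι → (Fin 2 → ℝ) → ℝ) (i : Fin 2)
    (x : Fin 2 → ℝ) (hf : ∀ k, DifferentiableAt ℝ (f k) x) :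
    pd i (fun y => ∑ k, w k * f k y) x = ∑ k, w k * pd i (f k) x := by
  simp [pd, fderiv_fun_sum (fun k _ => (hf k).const_mul (w k)), fderiv_const_mul (hf _)]

lemma ContDiff.pd {n : WithTop ℕ∞} {f : (Fin 2 → ℝ) → ℝ} (hf : ContDiff ℝ (n + 1) f) (i : Fin 2) :
    ContDiff ℝ n (pd i f) :=
  (hf.fderiv_right le_rfl).clm_apply contDiff_const

lemma contDiff_mulVec_add {m n : Type*} [Fintype m] [Fintype n] [DecidableEq n]
    (A : Matrix m n ℝ) (b : m → ℝ) {k : WithTop ℕ∞} : ContDiff ℝ k (fun z => A *ᵥ z + b) :=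
  (Matrix.toLin' A).toContinuousLinearMap.contDiff.add contDiff_const

lemma pd_comp_affine (A : Matrix (Fin 2) (Fin 2) ℝ) (b : Fin 2 → ℝ) (f : (Fin 2 → ℝ) → ℝ)
    (i : Fin 2) (x : Fin 2 → ℝ) (hf : DifferentiableAt ℝ f (A *ᵥ x + b)) :
    pd i (fun z => f (A *ᵥ z + b)) x = ∑ p, A p i * pd p f (A *ᵥ x + b) := by
  have hG : HasFDerivAt (fun z => A *ᵥ z + b) (Matrix.toLin' A).toContinuousLinearMap x :=
    ((Matrix.toLin' A).toContinuousLinearMap.hasFDerivAt).add_const b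
  have hcol : A *ᵥ Pi.single i 1 = ∑ p, A p i • Pi.single p 1 := by
    ext q
    simp [Matrix.mulVec_single, Finset.sum_apply, Pi.single_apply]
  have hcomp : HasFDerivAt (fun z => f (A *ᵥ z + b)) _ x := hf.hasFDerivAt.comp x hG
  rw [pd, hcomp.fderiv]
  simp [hcol, pd]

def pdHessian (f : (Fin 2 → ℝ) → ℝ) (x : Fin 2 → ℝ) : Matrix (Fin 2) (Fin 2) ℝ :=
  Matrix.of fun i j => pd i (pd j f) x

lemma divdivT_eq_sum_pdHessian (N : (Fin 2 → ℝ) → Matrix (Fin 2) (Fin 2) ℝ) (x : Fin 2 → ℝ) :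
    divdivT N x = ∑ i, ∑ j, pdHessian (fun y => N y i j) x i j :=
  rfl

lemma pdHessian_sum_mul {ι : Type*} [Fintype ι] (w : ι → ℝ) (f : ι → (Fin 2 → ℝ) → ℝ)
    (hf : ∀ k, ContDiff ℝ 2 (f k)) (x : Fin 2 → ℝ) :
    pdHessian (fun y => ∑ k, w k * f k y) x = ∑ k, w k • pdHessian (f k) x := by
  ext i j
  have hpd : pd j (fun y => ∑ k, w k * f k y) = fun y => ∑ k, w k * pd j (f k) y :=
    funext fun y => pd_sum_mul w f j y fun k => ((hf k).differentiable two_ne_zero) y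
  simp only [pdHessian, hpd, of_apply, Matrix.sum_apply, Matrix.smul_apply, smul_eq_mul]
  exact pd_sum_mul w _ i x fun k => ((hf k).pd j).differentiable one_ne_zero x

lemma pdHessian_comp_affine (A : Matrix (Fin 2) (Fin 2) ℝ) (b : Fin 2 → ℝ) (f : (Fin 2 → ℝ) → ℝ)
    (hf : ContDiff ℝ 2 f) (x : Fin 2 → ℝ) :
    pdHessian (fun z => f (A *ᵥ z + b)) x = Aᵀ * pdHessian f (A *ᵥ x + b) * A := by
  ext i j
  have hpd : pd j (fun z => f (A *ᵥ z + b)) = fun z => ∑ q, A q j * pd q f (A *ᵥ z + b) :=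
    funext fun z => pd_comp_affine A b f j z (hf.differentiable two_ne_zero _)
  have hpd' : ∀ q,
      pd i (fun z => pd q f (A *ᵥ z + b)) x = ∑ p, A p i * pd p (pd q f) (A *ᵥ x + b) :=
    fun q => pd_comp_affine A b _ i x ((hf.pd q).differentiable one_ne_zero _)
  rw [pdHessian, of_apply, hpd, pd_sum_mul (fun q => A q j) (fun q z => pd q f (A *ᵥ z + b)) i x
    fun q => ((hf.pd q).differentiable one_ne_zero _).comp x
      ((contDiff_mulVec_add A b (k := 1)).differentiable one_ne_zero x)]
  simp only [hpd', Matrix.mul_apply, transpose_apply, pdHessian, of_apply, Finset.sum_mul,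
    Finset.mul_sum]
  exact Finset.sum_congr rfl fun q _ => Finset.sum_congr rfl fun p _ => by ring

lemma divdivT_const_smul (c : ℝ) (N : (Fin 2 → ℝ) → Matrix (Fin 2) (Fin 2) ℝ) (x : Fin 2 → ℝ) :
    divdivT (fun y => c • N y) x = c * divdivT N x := by
  have hpd : ∀ i j, pd i (pd j fun y => (c • N y) i j) = c • pd i (pd j fun y => N y i j) :=
    fun i j => by rw [← pd_const_smul, ← pd_const_smul]; rfl
  simp only [divdivT, hpd, Pi.smul_apply, smul_eq_mul, Finset.mul_sum]

lemma sum_sum_mul_mul_apply {n : Type*} [Fintype n] (B Z : Matrix n n ℝ) (k l : n) :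
    ∑ i, ∑ j, B i k * B j l * Z i j = (Bᵀ * Z * B) k l := by
  simp only [Matrix.mul_apply, transpose_apply, Finset.sum_mul]
  rw [Finset.sum_comm]
  exact Finset.sum_congr rfl fun i _ => Finset.sum_congr rfl fun j _ => by ring

lemma divdivT_mul_mul_transpose (B : Matrix (Fin 2) (Fin 2) ℝ)
    (N : (Fin 2 → ℝ) → Matrix (Fin 2) (Fin 2) ℝ) (hN : ∀ k l, ContDiff ℝ 2 (fun y => N y k l))
    (x : Fin 2 → ℝ) :
    divdivT (fun y => B * N y * Bᵀ) x =
      ∑ k, ∑ l, (Bᵀ * pdHessian (fun y => N y k l) x * B) k l := by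
  have hentry : ∀ i j y,
      (B * N y * Bᵀ) i j = ∑ kl : Fin 2 × Fin 2, B i kl.1 * B j kl.2 * N y kl.1 kl.2 := by
    intro i j y
    simp only [Matrix.mul_apply, transpose_apply, Fintype.sum_prod_type, Finset.sum_mul]
    rw [Finset.sum_comm]
    exact Finset.sum_congr rfl fun k _ => Finset.sum_congr rfl fun l _ => by ring
  rw [divdivT_eq_sum_pdHessian]
  simp only [hentry, pdHessian_sum_mul _ _ fun kl : Fin 2 × Fin 2 => hN kl.1 kl.2,
    Matrix.sum_apply, Matrix.smul_apply, smul_eq_mul, ← sum_sum_mul_mul_apply]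
  exact ((Finset.sum_congr rfl fun i _ => Finset.sum_comm).trans Finset.sum_comm).trans
    (Fintype.sum_prod_type _)

lemma divdivT_mul_comp_affine_mul_transpose (B C : Matrix (Fin 2) (Fin 2) ℝ) (hCB : C * B = 1)
    (b : Fin 2 → ℝ) (N : (Fin 2 → ℝ) → Matrix (Fin 2) (Fin 2) ℝ)
    (hN : ∀ k l, ContDiff ℝ 2 (fun y => N y k l)) (y : Fin 2 → ℝ) :
    divdivT (fun z => B * N (C *ᵥ z + b) * Bᵀ) y = divdivT N (C *ᵥ y + b) := by
  have hcancel : ∀ H : Matrix (Fin 2) (Fin 2) ℝ, Bᵀ * (Cᵀ * H * C) * B = H := fun H => by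
    rw [← Matrix.mul_assoc, ← Matrix.mul_assoc, ← transpose_mul, hCB, Matrix.mul_assoc, hCB,
      transpose_one, Matrix.one_mul, Matrix.mul_one]
  rw [divdivT_mul_mul_transpose B (fun z => N (C *ᵥ z + b))
    fun k l => (hN k l).comp (contDiff_mulVec_add C b)]
  simp only [pdHessian_comp_affine C b _ (hN _ _), hcancel]
  rfl

theorem stmt_13_general (B : Matrix (Fin 2) (Fin 2) ℝ) (hB : IsUnit B.det) (a : Fin 2 → ℝ)
    (Mhat M : (Fin 2 → ℝ) → Matrix (Fin 2) (Fin 2) ℝ)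
    (hsmooth : ∀ i j : Fin 2, ContDiff ℝ 2 (fun x => Mhat x i j))
    (hPK : ∀ x, |B.det| • M (B.mulVec x + a) = B * Mhat x * Bᵀ) :
    ∀ x, |B.det| * divdivT M (B.mulVec x + a) = divdivT Mhat x := by
  intro x
  set C := B⁻¹
  have hCB : C * B = 1 := nonsing_inv_mul B hB
  have hBC : B * C = 1 := mul_nonsing_inv B hB
  have hc : |B.det| ≠ 0 := abs_ne_zero.mpr hB.ne_zero
  have hM : M = fun y => |B.det|⁻¹ • (B * Mhat (C *ᵥ y + -(C *ᵥ a)) * Bᵀ) := by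
    ext1 y
    rw [← hPK, inv_smul_smul₀ hc]
    simp only [mulVec_add, mulVec_neg, mulVec_mulVec, hBC, one_mulVec, neg_add_cancel_right]
  have hx : C *ᵥ (B *ᵥ x + a) + -(C *ᵥ a) = x := by
    rw [mulVec_add, mulVec_mulVec, hCB, one_mulVec, add_neg_cancel_right]
  rw [hM, divdivT_const_smul, divdivT_mul_comp_affine_mul_transpose B C hCB _ Mhat hsmooth, hx,
    ← mul_assoc, mul_inv_cancel₀ hc, one_mul]

/-- Piola–Kirchhoff transformation: `|det B| · (div div M)∘F = div div M̂`. -/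
theorem stmt_13 (B : Matrix (Fin 2) (Fin 2) ℝ) (hB : IsUnit B.det) (a : Fin 2 → ℝ)
    (Mhat M : (Fin 2 → ℝ) → Matrix (Fin 2) (Fin 2) ℝ)
    (hsmooth : ∀ i j : Fin 2, ContDiff ℝ 2 (fun x => Mhat x i j))
    (hsym : ∀ x, (Mhat x).IsSymm)
    (hPK : ∀ x, |B.det| • M (B.mulVec x + a) = B * Mhat x * Bᵀ) :
    ∀ x, |B.det| * divdivT M (B.mulVec x + a) = divdivT Mhat x :=
  stmt_13_general B hB a Mhat M hsmooth hPK
end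
end

section
/- Any tensor M ∈ X⁰ whose 16 edge-moment degrees of freedom (zeroth and first moments of normal-normal traces and effective shear forces on the four edges) and 4 corner-jump degrees of freedom all vanish must be the zero tensor. -/
open MvPolynomial

noncomputable section

open intervalIntegral in
private lemma key17 (f : ℝ → ℝ) (c0 c1 c2 : ℝ) (hf : ∀ t, f t = c0 + c1*t + c2*t^2)
    (h0 : (∫ t in (-1:ℝ)..1, f t) = 0) : 2*c0 + 2/3*c2 = 0 := by
  have hfe : f = fun t => c0 + c1*t + c2*t^2 := funext hf
  rw [hfe] at h0
  have i1 : IntervalIntegrable (fun _:ℝ => c0) MeasureTheory.volume (-1) 1 := intervalIntegrable_const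
  have i2 : IntervalIntegrable (fun t:ℝ => c1*t) MeasureTheory.volume (-1) 1 :=
    (continuous_const.mul continuous_id).intervalIntegrable _ _
  have i3 : IntervalIntegrable (fun t:ℝ => c2*t^2) MeasureTheory.volume (-1) 1 :=
    (continuous_const.mul (continuous_pow 2)).intervalIntegrable _ _
  rw [integral_add (i1.add i2) i3, integral_add i1 i2,
    integral_const, integral_const_mul,
    integral_const_mul, integral_id,
    integral_pow] at h0
  norm_num at h0 ⊢
  linarith

set_option maxRecDepth 100000 in
set_option maxHeartbeats 3200000 in
/-- Injectivity half of unisolvency: a tensor in `X⁰` with all 20 vanishing degrees of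
freedom is zero. -/
theorem stmt_17 (a b c : R2) (h : (a, b, c) ∈ X0)
    (hdof : ∀ i : Fin 20, dof (a, b, c) i = 0) :
    a = 0 ∧ b = 0 ∧ c = 0 := by
  have h0 := hdof ⟨0, by norm_num⟩
  have h1 := hdof ⟨1, by norm_num⟩
  have h2 := hdof ⟨2, by norm_num⟩
  have h3 := hdof ⟨3, by norm_num⟩
  have h4 := hdof ⟨4, by norm_num⟩
  have h5 := hdof ⟨5, by norm_num⟩
  have h6 := hdof ⟨6, by norm_num⟩
  have h7 := hdof ⟨7, by norm_num⟩
  have h8 := hdof ⟨8, by norm_num⟩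
  have h9 := hdof ⟨9, by norm_num⟩
  have h10 := hdof ⟨10, by norm_num⟩
  have h11 := hdof ⟨11, by norm_num⟩
  have h12 := hdof ⟨12, by norm_num⟩
  have h13 := hdof ⟨13, by norm_num⟩
  have h14 := hdof ⟨14, by norm_num⟩
  have h15 := hdof ⟨15, by norm_num⟩
  have h16 := hdof ⟨16, by norm_num⟩
  have h17 := hdof ⟨17, by norm_num⟩
  have h18 := hdof ⟨18, by norm_num⟩
  have h19 := hdof ⟨19, by norm_num⟩
  norm_num [dof, nnTrace, shear, leg, cornerJump] at h0
  norm_num [dof, nnTrace, shear, leg, cornerJump] at h1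
  norm_num [dof, nnTrace, shear, leg, cornerJump] at h2
  norm_num [dof, nnTrace, shear, leg, cornerJump] at h3
  norm_num [dof, nnTrace, shear, leg, cornerJump] at h4
  norm_num [dof, nnTrace, shear, leg, cornerJump] at h5
  norm_num [dof, nnTrace, shear, leg, cornerJump] at h6
  norm_num [dof, nnTrace, shear, leg, cornerJump] at h7
  norm_num [dof, nnTrace, shear, leg, cornerJump] at h8
  norm_num [dof, nnTrace, shear, leg, cornerJump] at h9
  norm_num [dof, nnTrace, shear, leg, cornerJump] at h10
  norm_num [dof, nnTrace, shear, leg, cornerJump] at h11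
  norm_num [dof, nnTrace, shear, leg, cornerJump] at h12
  norm_num [dof, nnTrace, shear, leg, cornerJump] at h13
  norm_num [dof, nnTrace, shear, leg, cornerJump] at h14
  norm_num [dof, nnTrace, shear, leg, cornerJump] at h15
  norm_num [dof, nnTrace, shear, leg, cornerJump] at h16
  norm_num [dof, nnTrace, shear, leg, cornerJump] at h17
  norm_num [dof, nnTrace, shear, leg, cornerJump] at h18
  norm_num [dof, nnTrace, shear, leg, cornerJump] at h19
  rw [X0, Submodule.mem_prod, Submodule.mem_prod] at h
  obtain ⟨ha, hb, hc⟩ := h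
  simp only [Aspace, Submodule.mem_span_insert, Submodule.mem_span_singleton] at ha
  obtain ⟨a0, _, ⟨a1, _, ⟨a2, _, ⟨a3, _, ⟨a4, _, ⟨a5, rfl⟩, rfl⟩, rfl⟩, rfl⟩, rfl⟩, rfl⟩ := ha
  simp only [Bspace, Submodule.mem_span_insert, Submodule.mem_span_singleton] at hb
  obtain ⟨b0, _, ⟨b1, _, ⟨b2, _, ⟨b3, _, ⟨b4, _, ⟨b5, _, ⟨b6, _, ⟨b7, rfl⟩, rfl⟩, rfl⟩, rfl⟩, rfl⟩, rfl⟩, rfl⟩, rfl⟩ := hb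
  simp only [Cspace, Submodule.mem_span_insert, Submodule.mem_span_singleton] at hc
  obtain ⟨g0, _, ⟨g1, _, ⟨g2, _, ⟨g3, _, ⟨g4, _, ⟨g5, rfl⟩, rfl⟩, rfl⟩, rfl⟩, rfl⟩, rfl⟩ := hc
  have e0 : 2*(g0-g2+g4-g5) + 2/3*(0) = 0 := by
    refine key17 _ (g0-g2+g4-g5) (g1-g3) (0) (fun t => by simp [ev, shearH, shearV, Px, Py, MvPolynomial.smul_eval, pderiv_X, Pi.single_apply, pderiv_mul, pderiv_pow, pderiv_one, pderiv_C]; ring) h0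
  have e1 : 2*(a0+a1+a4+a5) + 2/3*(0) = 0 := by
    refine key17 _ (a0+a1+a4+a5) (a2+a3) (0) (fun t => by simp [ev, shearH, shearV, Px, Py, MvPolynomial.smul_eval, pderiv_X, Pi.single_apply, pderiv_mul, pderiv_pow, pderiv_one, pderiv_C]; ring) h1
  have e2 : 2*(g0+g2+g4+g5) + 2/3*(0) = 0 := by
    refine key17 _ (g0+g2+g4+g5) (g1+g3) (0) (fun t => by simp [ev, shearH, shearV, Px, Py, MvPolynomial.smul_eval, pderiv_X, Pi.single_apply, pderiv_mul, pderiv_pow, pderiv_one, pderiv_C]; ring) h2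
  have e3 : 2*(a0-a1+a4-a5) + 2/3*(0) = 0 := by
    refine key17 _ (a0-a1+a4-a5) (a2-a3) (0) (fun t => by simp [ev, shearH, shearV, Px, Py, MvPolynomial.smul_eval, pderiv_X, Pi.single_apply, pderiv_mul, pderiv_pow, pderiv_one, pderiv_C]; ring) h3
  have e4 : 2*(0) + 2/3*(g1-g3) = 0 := by
    refine key17 _ (0) (g0-g2+g4-g5) (g1-g3) (fun t => by simp [ev, shearH, shearV, Px, Py, MvPolynomial.smul_eval, pderiv_X, Pi.single_apply, pderiv_mul, pderiv_pow, pderiv_one, pderiv_C]; ring) h4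
  have e5 : 2*(0) + 2/3*(a2+a3) = 0 := by
    refine key17 _ (0) (a0+a1+a4+a5) (a2+a3) (fun t => by simp [ev, shearH, shearV, Px, Py, MvPolynomial.smul_eval, pderiv_X, Pi.single_apply, pderiv_mul, pderiv_pow, pderiv_one, pderiv_C]; ring) h5
  have e6 : 2*(0) + 2/3*(g1+g3) = 0 := by
    refine key17 _ (0) (g0+g2+g4+g5) (g1+g3) (fun t => by simp [ev, shearH, shearV, Px, Py, MvPolynomial.smul_eval, pderiv_X, Pi.single_apply, pderiv_mul, pderiv_pow, pderiv_one, pderiv_C]; ring) h6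
  have e7 : 2*(0) + 2/3*(a2-a3) = 0 := by
    refine key17 _ (0) (a0-a1+a4-a5) (a2-a3) (fun t => by simp [ev, shearH, shearV, Px, Py, MvPolynomial.smul_eval, pderiv_X, Pi.single_apply, pderiv_mul, pderiv_pow, pderiv_one, pderiv_C]; ring) h7
  have e8 : 2*((2)*b1+(-2)*b4+(2)*b7+g2+(-2)*g4+(3)*g5) + 2/3*(0) = 0 := by
    refine key17 _ ((2)*b1+(-2)*b4+(2)*b7+g2+(-2)*g4+(3)*g5) ((4)*b3+(-4)*b6+g3) (0) (fun t => by simp [ev, shearH, shearV, Px, Py, MvPolynomial.smul_eval, pderiv_X, Pi.single_apply, pderiv_mul, pderiv_pow, pderiv_one, pderiv_C]; ring) h8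
  have e9 : 2*(a1+(2)*a4+(3)*a5+(2)*b2+(2)*b4+(2)*b6) + 2/3*(0) = 0 := by
    refine key17 _ (a1+(2)*a4+(3)*a5+(2)*b2+(2)*b4+(2)*b6) (a3+(4)*b5+(4)*b7) (0) (fun t => by simp [ev, shearH, shearV, Px, Py, MvPolynomial.smul_eval, pderiv_X, Pi.single_apply, pderiv_mul, pderiv_pow, pderiv_one, pderiv_C]; ring) h9
  have e10 : 2*((2)*b1+(2)*b4+(2)*b7+g2+(2)*g4+(3)*g5) + 2/3*(0) = 0 := by
    refine key17 _ ((2)*b1+(2)*b4+(2)*b7+g2+(2)*g4+(3)*g5) ((4)*b3+(4)*b6+g3) (0) (fun t => by simp [ev, shearH, shearV, Px, Py, MvPolynomial.smul_eval, pderiv_X, Pi.single_apply, pderiv_mul, pderiv_pow, pderiv_one, pderiv_C]; ring) h10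
  have e11 : 2*(a1+(-2)*a4+(3)*a5+(2)*b2+(-2)*b4+(2)*b6) + 2/3*(0) = 0 := by
    refine key17 _ (a1+(-2)*a4+(3)*a5+(2)*b2+(-2)*b4+(2)*b6) (a3+(4)*b5+(-4)*b7) (0) (fun t => by simp [ev, shearH, shearV, Px, Py, MvPolynomial.smul_eval, pderiv_X, Pi.single_apply, pderiv_mul, pderiv_pow, pderiv_one, pderiv_C]; ring) h11
  have e12 : 2*(0) + 2/3*((4)*b3+(-4)*b6+g3) = 0 := by
    refine key17 _ (0) ((2)*b1+(-2)*b4+(2)*b7+g2+(-2)*g4+(3)*g5) ((4)*b3+(-4)*b6+g3) (fun t => by simp [ev, shearH, shearV, Px, Py, MvPolynomial.smul_eval, pderiv_X, Pi.single_apply, pderiv_mul, pderiv_pow, pderiv_one, pderiv_C]; ring) h12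
  have e13 : 2*(0) + 2/3*(a3+(4)*b5+(4)*b7) = 0 := by
    refine key17 _ (0) (a1+(2)*a4+(3)*a5+(2)*b2+(2)*b4+(2)*b6) (a3+(4)*b5+(4)*b7) (fun t => by simp [ev, shearH, shearV, Px, Py, MvPolynomial.smul_eval, pderiv_X, Pi.single_apply, pderiv_mul, pderiv_pow, pderiv_one, pderiv_C]; ring) h13
  have e14 : 2*(0) + 2/3*((4)*b3+(4)*b6+g3) = 0 := by
    refine key17 _ (0) ((2)*b1+(2)*b4+(2)*b7+g2+(2)*g4+(3)*g5) ((4)*b3+(4)*b6+g3) (fun t => by simp [ev, shearH, shearV, Px, Py, MvPolynomial.smul_eval, pderiv_X, Pi.single_apply, pderiv_mul, pderiv_pow, pderiv_one, pderiv_C]; ring) h14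
  have e15 : 2*(0) + 2/3*(a3+(4)*b5+(-4)*b7) = 0 := by
    refine key17 _ (0) (a1+(-2)*a4+(3)*a5+(2)*b2+(-2)*b4+(2)*b6) (a3+(4)*b5+(-4)*b7) (fun t => by simp [ev, shearH, shearV, Px, Py, MvPolynomial.smul_eval, pderiv_X, Pi.single_apply, pderiv_mul, pderiv_pow, pderiv_one, pderiv_C]; ring) h15
  have e16 : (b0-b1-b2+b3+b4+b5-b6-b7 : ℝ) = 0 := by
    simp [ev, shearH, shearV, Px, Py, MvPolynomial.smul_eval, pderiv_X, Pi.single_apply, pderiv_mul, pderiv_pow, pderiv_one, pderiv_C] at h16; linarith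
  have e17 : (b0+b1-b2+b3-b4+b5-b6+b7 : ℝ) = 0 := by
    simp [ev, shearH, shearV, Px, Py, MvPolynomial.smul_eval, pderiv_X, Pi.single_apply, pderiv_mul, pderiv_pow, pderiv_one, pderiv_C] at h17; linarith
  have e18 : (b0+b1+b2+b3+b4+b5+b6+b7 : ℝ) = 0 := by
    simp [ev, shearH, shearV, Px, Py, MvPolynomial.smul_eval, pderiv_X, Pi.single_apply, pderiv_mul, pderiv_pow, pderiv_one, pderiv_C] at h18; linarith
  have e19 : (b0-b1+b2+b3-b4+b5+b6-b7 : ℝ) = 0 := by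
    simp [ev, shearH, shearV, Px, Py, MvPolynomial.smul_eval, pderiv_X, Pi.single_apply, pderiv_mul, pderiv_pow, pderiv_one, pderiv_C] at h19; linarith
  have ka0 : a0 = 0 := by linarith [e0, e1, e2, e3, e4, e5, e6, e7, e8, e9, e10, e11, e12, e13, e14, e15, e16, e17, e18, e19]
  have ka1 : a1 = 0 := by linarith [e0, e1, e2, e3, e4, e5, e6, e7, e8, e9, e10, e11, e12, e13, e14, e15, e16, e17, e18, e19]
  have ka2 : a2 = 0 := by linarith [e0, e1, e2, e3, e4, e5, e6, e7, e8, e9, e10, e11, e12, e13, e14, e15, e16, e17, e18, e19]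
  have ka3 : a3 = 0 := by linarith [e0, e1, e2, e3, e4, e5, e6, e7, e8, e9, e10, e11, e12, e13, e14, e15, e16, e17, e18, e19]
  have ka4 : a4 = 0 := by linarith [e0, e1, e2, e3, e4, e5, e6, e7, e8, e9, e10, e11, e12, e13, e14, e15, e16, e17, e18, e19]
  have ka5 : a5 = 0 := by linarith [e0, e1, e2, e3, e4, e5, e6, e7, e8, e9, e10, e11, e12, e13, e14, e15, e16, e17, e18, e19]
  have kb0 : b0 = 0 := by linarith [e0, e1, e2, e3, e4, e5, e6, e7, e8, e9, e10, e11, e12, e13, e14, e15, e16, e17, e18, e19]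
  have kb1 : b1 = 0 := by linarith [e0, e1, e2, e3, e4, e5, e6, e7, e8, e9, e10, e11, e12, e13, e14, e15, e16, e17, e18, e19]
  have kb2 : b2 = 0 := by linarith [e0, e1, e2, e3, e4, e5, e6, e7, e8, e9, e10, e11, e12, e13, e14, e15, e16, e17, e18, e19]
  have kb3 : b3 = 0 := by linarith [e0, e1, e2, e3, e4, e5, e6, e7, e8, e9, e10, e11, e12, e13, e14, e15, e16, e17, e18, e19]
  have kb4 : b4 = 0 := by linarith [e0, e1, e2, e3, e4, e5, e6, e7, e8, e9, e10, e11, e12, e13, e14, e15, e16, e17, e18, e19]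
  have kb5 : b5 = 0 := by linarith [e0, e1, e2, e3, e4, e5, e6, e7, e8, e9, e10, e11, e12, e13, e14, e15, e16, e17, e18, e19]
  have kb6 : b6 = 0 := by linarith [e0, e1, e2, e3, e4, e5, e6, e7, e8, e9, e10, e11, e12, e13, e14, e15, e16, e17, e18, e19]
  have kb7 : b7 = 0 := by linarith [e0, e1, e2, e3, e4, e5, e6, e7, e8, e9, e10, e11, e12, e13, e14, e15, e16, e17, e18, e19]
  have kg0 : g0 = 0 := by linarith [e0, e1, e2, e3, e4, e5, e6, e7, e8, e9, e10, e11, e12, e13, e14, e15, e16, e17, e18, e19]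
  have kg1 : g1 = 0 := by linarith [e0, e1, e2, e3, e4, e5, e6, e7, e8, e9, e10, e11, e12, e13, e14, e15, e16, e17, e18, e19]
  have kg2 : g2 = 0 := by linarith [e0, e1, e2, e3, e4, e5, e6, e7, e8, e9, e10, e11, e12, e13, e14, e15, e16, e17, e18, e19]
  have kg3 : g3 = 0 := by linarith [e0, e1, e2, e3, e4, e5, e6, e7, e8, e9, e10, e11, e12, e13, e14, e15, e16, e17, e18, e19]
  have kg4 : g4 = 0 := by linarith [e0, e1, e2, e3, e4, e5, e6, e7, e8, e9, e10, e11, e12, e13, e14, e15, e16, e17, e18, e19]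
  have kg5 : g5 = 0 := by linarith [e0, e1, e2, e3, e4, e5, e6, e7, e8, e9, e10, e11, e12, e13, e14, e15, e16, e17, e18, e19]
  refine ⟨?_, ?_, ?_⟩
  · rw [ka0, ka1, ka2, ka3, ka4, ka5]; simp
  · rw [kb0, kb1, kb2, kb3, kb4, kb5, kb6, kb7]; simp
  · rw [kg0, kg1, kg2, kg3, kg4, kg5]; simp
end
end
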